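/- arXiv:1812.11419 — 7 statements merged into one kernel-verified Lean document; each statement's English description precedes it below -/
import Mathlib

section
/- Let N ≥ 2, let u be a Lebesgue-measurable real-valued function defined almost everywhere on ℝ^N, let a ∈ ℝ^N be a point where u is defined, and let v ∈ ℝ^N. If u is differentiable at a in the capacity sense with gradient v, i.e. lim_{r→0} r^{-(N-1)} sup_{t>0} t · Cap({x ∈ B(a,r) : |u(x) − u(a) − v·(x−a)| > t|x−a|}) = 0, then u is differentiable at a in the weak L^{N/(N-1)} sense with the same gradient, i.e. lim_{r→0} r^{-(N-1)} sup_{t>0} t · |{x ∈ B(a,r) : |u(x) − u(a) − v·(x−a)| > t|x−a|}|^{(N-1)/N} = 0, where |·| denotes Lebesgue measure. -/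
/-!
Lebesgue measure is dominated by capacity: `|A| ^ ((N-1)/N) ≤ C · Cap(A)` for measurable `A`.
For compact `K`, the potential of `λ|_K` at any point `x` is at most `C |K| ^ (1/N)`: split `K`
at the ball `B(x, ρ)` with `ρ = |K| ^ (1/N)`; in polar coordinates the kernel integrates to
`N |B(0,1)| ρ` over the ball, and off the ball it is at most `ρ ^ (1-N)` on a set of measure
`ρ ^ N`. Hence `λ|_K / (C |K| ^ (1/N))` is admissible in the definition of `Cap`, and inner
regularity extends the inequality to measurable sets. Applied to the exceptional sets
`{x ∈ B(a,r) : |u x - u a - v·(x-a)| > t |x-a|}` it bounds the weak quantity by `C` times the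
capacity quantity.
-/

open MeasureTheory Metric Filter
open scoped ENNReal Topology NNReal

/-- The capacity (in the de la Vallée Poussin sense) associated with the kernel
`|x|^{-(N-1)}`: for compact `E`, the sup of `ν E` over positive measures `ν`
supported in `E` whose potential is everywhere at most `1`; for arbitrary sets,
the sup over compact subsets. -/
noncomputable def rieszCap (N : ℕ) (A : Set (EuclideanSpace ℝ (Fin N))) : ℝ≥0∞ :=
  ⨆ (E : Set (EuclideanSpace ℝ (Fin N))) (_ : IsCompact E) (_ : E ⊆ A)
    (ν : Measure (EuclideanSpace ℝ (Fin N))) (_ : ν Eᶜ = 0)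
    (_ : ∀ x : EuclideanSpace ℝ (Fin N),
      (∫⁻ y, (‖x - y‖₊ : ℝ≥0∞) ^ (-(N - 1 : ℝ)) ∂ν) ≤ 1), ν E

open Set

section Potential

variable {E : Type*} [NormedAddCommGroup E] [MeasurableSpace E] [BorelSpace E]

theorem setLIntegral_diff_ball_nnnorm_sub_rpow_neg_le (μ : Measure E) {s : Set E}
    (hs : MeasurableSet s) (x : E) {R α : ℝ} (hα : 0 ≤ α) :
    ∫⁻ y in s \ ball x R, (‖x - y‖₊ : ℝ≥0∞) ^ (-α) ∂μ ≤ ENNReal.ofReal R ^ (-α) * μ s := by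
  have hkernel : ∀ y ∈ s \ ball x R,
      (‖x - y‖₊ : ℝ≥0∞) ^ (-α) ≤ ENNReal.ofReal R ^ (-α) := by
    intro y hy
    have hRy : ENNReal.ofReal R ≤ ‖x - y‖₊ := by
      rw [← ENNReal.ofReal_coe_nnreal, coe_nnnorm, ← dist_eq_norm, dist_comm]
      exact ENNReal.ofReal_le_ofReal (not_lt.mp hy.2)
    rw [ENNReal.rpow_neg, ENNReal.rpow_neg]
    exact ENNReal.inv_le_inv.mpr (ENNReal.rpow_le_rpow hRy hα)
  calc ∫⁻ y in s \ ball x R, (‖x - y‖₊ : ℝ≥0∞) ^ (-α) ∂μ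
      ≤ ∫⁻ _ in s \ ball x R, ENNReal.ofReal R ^ (-α) ∂μ :=
        setLIntegral_mono' (hs.diff measurableSet_ball) hkernel
    _ ≤ ENNReal.ofReal R ^ (-α) * μ s := by
        rw [setLIntegral_const]
        gcongr
        exact sdiff_subset

variable [NormedSpace ℝ E] [FiniteDimensional ℝ E] [Nontrivial E] (μ : Measure E)
  [μ.IsAddHaarMeasure]

theorem setLIntegral_ball_zero_nnnorm_rpow_neg_finrank_sub_one {R : ℝ} (hR : 0 ≤ R) :
    ∫⁻ y in ball 0 R, (‖y‖₊ : ℝ≥0∞) ^ (-((Module.finrank ℝ E : ℝ) - 1)) ∂μ =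
      ENNReal.ofReal (Module.finrank ℝ E * μ.real (ball 0 1) * R) := by
  set d := Module.finrank ℝ E
  set g : ℝ → ℝ := (Iio R).indicator fun t => t ^ (-((d : ℝ) - 1))
  have hradial : EqOn (fun t : ℝ => t ^ (d - 1) • g t) ((Iio R).indicator 1) (Ioi 0) := by
    intro t (ht : 0 < t)
    by_cases htR : t < R
    · have hd : 1 ≤ d := Module.finrank_pos
      simp [g, htR, ← Real.rpow_natCast, ← Real.rpow_add ht, Nat.cast_sub hd]
    · simp [g, htR]
  have hint : Integrable (fun y : E => g ‖y‖) μ := by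
    rw [integrable_fun_norm_addHaar, integrableOn_congr_fun hradial measurableSet_Ioi,
      IntegrableOn, integrable_indicator_iff measurableSet_Iio]
    refine integrableOn_const ?_
    rw [Measure.restrict_apply measurableSet_Iio, Iio_inter_Ioi]
    exact measure_Ioo_lt_top.ne
  have hae : (ball (0 : E) R).indicator (fun y => (‖y‖₊ : ℝ≥0∞) ^ (-((d : ℝ) - 1)))
      =ᵐ[μ] fun y => ENNReal.ofReal (g ‖y‖) := by
    filter_upwards [measure_eq_zero_iff_ae_notMem.mp (measure_singleton (μ := μ) 0)] with y hy
    have hy : 0 < ‖y‖ := norm_pos_iff.mpr hy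
    by_cases hyR : ‖y‖ < R
    · simp [g, hyR, ← ENNReal.ofReal_rpow_of_pos hy, enorm_eq_nnnorm]
    · simp [g, hyR]
  calc ∫⁻ y in ball 0 R, (‖y‖₊ : ℝ≥0∞) ^ (-((d : ℝ) - 1)) ∂μ
      = ∫⁻ y, ENNReal.ofReal (g ‖y‖) ∂μ := by
        rw [← lintegral_indicator measurableSet_ball, lintegral_congr_ae hae]
    _ = ENNReal.ofReal (∫ y, g ‖y‖ ∂μ) :=
        (ofReal_integral_eq_lintegral_ofReal hint (.of_forall fun y =>
          indicator_apply_nonneg fun _ => Real.rpow_nonneg (norm_nonneg y) _)).symm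
    _ = ENNReal.ofReal (d * μ.real (ball 0 1) * R) := by
        rw [integral_fun_norm_addHaar, setIntegral_congr_fun measurableSet_Ioi hradial,
          integral_indicator_one measurableSet_Iio,
          measureReal_restrict_apply measurableSet_Iio, Iio_inter_Ioi, Real.volume_real_Ioo_of_le hR]
        simp only [nsmul_eq_mul, smul_eq_mul, mul_assoc, sub_zero]
        rfl

theorem setLIntegral_ball_nnnorm_sub_rpow_neg_finrank_sub_one (x : E) {R : ℝ} (hR : 0 ≤ R) :
    ∫⁻ y in ball x R, (‖x - y‖₊ : ℝ≥0∞) ^ (-((Module.finrank ℝ E : ℝ) - 1)) ∂μ =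
      ENNReal.ofReal (Module.finrank ℝ E * μ.real (ball 0 1) * R) := by
  set k : E → ℝ≥0∞ := fun z => (‖z‖₊ : ℝ≥0∞) ^ (-((Module.finrank ℝ E : ℝ) - 1))
  calc ∫⁻ y in ball x R, k (x - y) ∂μ = ∫⁻ y, (ball 0 R).indicator k (y - x) ∂μ := by
        rw [← lintegral_indicator measurableSet_ball]
        congr 1 with y
        simp [k, indicator, mem_ball, dist_eq_norm, ← nnnorm_neg (x - y)]
    _ = _ := by
        rw [lintegral_sub_right_eq_self, lintegral_indicator measurableSet_ball,
          setLIntegral_ball_zero_nnnorm_rpow_neg_finrank_sub_one μ hR]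

theorem setLIntegral_nnnorm_sub_rpow_neg_finrank_sub_one_le {s : Set E} (hs : MeasurableSet s)
    (x : E) :
    ∫⁻ y in s, (‖x - y‖₊ : ℝ≥0∞) ^ (-((Module.finrank ℝ E : ℝ) - 1)) ∂μ ≤
      (ENNReal.ofReal (Module.finrank ℝ E * μ.real (ball 0 1)) + 1) *
        μ s ^ ((Module.finrank ℝ E : ℝ)⁻¹) := by
  set d := Module.finrank ℝ E
  have hd : (0 : ℝ) < d := Nat.cast_pos.mpr Module.finrank_pos
  rcases eq_or_ne (μ s) 0 with h0 | h0
  · simp [Measure.restrict_eq_zero.mpr h0]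
  rcases eq_or_ne (μ s) ∞ with htop | htop
  · simp [htop, ENNReal.top_rpow_of_pos (inv_pos.mpr hd)]
  set ρ := μ s ^ (d⁻¹ : ℝ)
  have hρ0 : ρ ≠ 0 := by simp [ρ, h0, htop]
  have hρtop : ρ ≠ ∞ := by simp [ρ, h0, htop]
  set R := ρ.toReal
  have hR : 0 < R := ENNReal.toReal_pos hρ0 hρtop
  have hρR : ENNReal.ofReal R = ρ := ENNReal.ofReal_toReal hρtop
  have hfar : ENNReal.ofReal R ^ (-((d : ℝ) - 1)) * μ s = ρ := by
    rw [hρR, ← ENNReal.rpow_inv_rpow hd.ne' (μ s), ← ENNReal.rpow_add _ _ hρ0 hρtop]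
    norm_num
  calc ∫⁻ y in s, (‖x - y‖₊ : ℝ≥0∞) ^ (-((d : ℝ) - 1)) ∂μ
      ≤ ∫⁻ y in ball x R ∪ s \ ball x R, (‖x - y‖₊ : ℝ≥0∞) ^ (-((d : ℝ) - 1)) ∂μ :=
        lintegral_mono_set fun y hy => by by_cases hyb : y ∈ ball x R <;> simp [hy, hyb]
    _ ≤ ENNReal.ofReal (d * μ.real (ball 0 1) * R) + ρ := by
        refine (lintegral_union_le _ _ _).trans (add_le_add ?_ ?_)
        · rw [setLIntegral_ball_nnnorm_sub_rpow_neg_finrank_sub_one μ x hR.le]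
        · exact hfar ▸ setLIntegral_diff_ball_nnnorm_sub_rpow_neg_le μ hs x
            (sub_nonneg.mpr (Nat.one_le_cast.mpr Module.finrank_pos))
    _ = (ENNReal.ofReal (d * μ.real (ball 0 1)) + 1) * ρ := by
        rw [ENNReal.ofReal_mul (by positivity), hρR, add_mul, one_mul]

end Potential

theorem le_mul_rieszCap {N : ℕ} {K A : Set (EuclideanSpace ℝ (Fin N))} (hK : IsCompact K)
    (hKA : K ⊆ A) {ν : Measure (EuclideanSpace ℝ (Fin N))} (hν : ν Kᶜ = 0) {M : ℝ≥0∞}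
    (hM₀ : M ≠ 0) (hM : M ≠ ∞)
    (hpot : ∀ x, ∫⁻ y, (‖x - y‖₊ : ℝ≥0∞) ^ (-(N - 1 : ℝ)) ∂ν ≤ M) :
    ν K ≤ M * rieszCap N A := by
  have hadmissible : (M⁻¹ • ν) K ≤ rieszCap N A := by
    refine le_iSup₂_of_le K hK <| le_iSup₂_of_le hKA (M⁻¹ • ν) <| le_iSup₂_of_le ?_ ?_ le_rfl
    · simp [hν]
    · intro x
      rw [lintegral_smul_measure]
      exact ENNReal.inv_mul_le_iff hM₀ hM |>.mpr (by simpa using hpot x)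
  calc ν K = M * (M⁻¹ • ν) K := by simp [← mul_assoc, ENNReal.mul_inv_cancel hM₀ hM]
    _ ≤ M * rieszCap N A := by gcongr

theorem volume_rpow_le_mul_rieszCap_of_isCompact {N : ℕ} (hN : 2 ≤ N)
    {K A : Set (EuclideanSpace ℝ (Fin N))} (hK : IsCompact K) (hKA : K ⊆ A) :
    volume K ^ ((N - 1 : ℝ) / N) ≤
      (ENNReal.ofReal (N * volume.real (ball (0 : EuclideanSpace ℝ (Fin N)) 1)) + 1) *
        rieszCap N A := by
  have : Nontrivial (EuclideanSpace ℝ (Fin N)) :=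
    Module.nontrivial_of_finrank_pos (R := ℝ) (by rw [finrank_euclideanSpace_fin]; omega)
  have hN' : (0 : ℝ) < N := by positivity
  rcases eq_or_ne (volume K) 0 with h0 | h0
  · have hp : (0 : ℝ) < (N - 1) / N := div_pos (sub_pos.mpr (by exact_mod_cast hN)) hN'
    simp [h0, ENNReal.zero_rpow_of_pos hp]
  have hfin : volume K ≠ ∞ := hK.measure_lt_top.ne
  have hpot := setLIntegral_nnnorm_sub_rpow_neg_finrank_sub_one_le volume hK.measurableSet
  simp only [finrank_euclideanSpace_fin] at hpot
  have hKcap := le_mul_rieszCap hK hKA (ν := volume.restrict K)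
    (by simp [Measure.restrict_apply' hK.measurableSet]) (by simp [h0, hfin])
    (ENNReal.mul_ne_top (ENNReal.add_ne_top.mpr ⟨ENNReal.ofReal_ne_top, ENNReal.one_ne_top⟩)
      (ENNReal.rpow_ne_top_of_nonneg (by positivity) hfin)) hpot
  rw [Measure.restrict_apply_self, mul_right_comm] at hKcap
  calc volume K ^ ((N - 1 : ℝ) / N) = volume K / volume K ^ (N⁻¹ : ℝ) := by
        rw [sub_div, div_self hN'.ne', ENNReal.rpow_sub _ _ h0 hfin, ENNReal.rpow_one, one_div]
    _ ≤ _ := ENNReal.div_le_of_le_mul hKcap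

theorem exists_volume_rpow_le_mul_rieszCap {N : ℕ} (hN : 2 ≤ N) :
    ∃ C ≠ ∞, ∀ A : Set (EuclideanSpace ℝ (Fin N)), MeasurableSet A →
      volume A ^ ((N - 1 : ℝ) / N) ≤ C * rieszCap N A := by
  have hp : (0 : ℝ) < (N - 1) / N := div_pos (sub_pos.mpr (by exact_mod_cast hN)) (by positivity)
  refine ⟨ENNReal.ofReal (N * volume.real (ball (0 : EuclideanSpace ℝ (Fin N)) 1)) + 1,
    ENNReal.add_ne_top.mpr ⟨ENNReal.ofReal_ne_top, ENNReal.one_ne_top⟩, fun A hA => ?_⟩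
  rw [← ENNReal.le_rpow_inv_iff hp, hA.measure_eq_iSup_isCompact]
  exact iSup₂_le fun K hKA => iSup_le fun hK =>
    (ENNReal.le_rpow_inv_iff hp).mpr (volume_rpow_le_mul_rieszCap_of_isCompact hN hK hKA)

/-- For `N ≥ 2`, differentiability at a point in the capacity sense implies
differentiability at that point in the weak `L^{N/(N-1)}` sense, with the same gradient. -/
theorem capacity_differentiability_implies_weak_differentiability
    (N : ℕ) (hN : 2 ≤ N)
    (u : EuclideanSpace ℝ (Fin N) → ℝ) (hu : Measurable u)
    (a : EuclideanSpace ℝ (Fin N)) (v : EuclideanSpace ℝ (Fin N))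
    (hcap : Tendsto (fun r : ℝ =>
        (ENNReal.ofReal (r ^ (N - 1)))⁻¹ *
          ⨆ (t : ℝ) (_ : 0 < t), ENNReal.ofReal t *
            rieszCap N {x | x ∈ ball a r ∧
              t * ‖x - a‖ < |u x - u a - ∑ i, v i * (x - a) i|})
      (𝓝[>] (0 : ℝ)) (𝓝 0)) :
    Tendsto (fun r : ℝ =>
        (ENNReal.ofReal (r ^ (N - 1)))⁻¹ *
          ⨆ (t : ℝ) (_ : 0 < t), ENNReal.ofReal t *
            (volume {x | x ∈ ball a r ∧
                t * ‖x - a‖ < |u x - u a - ∑ i, v i * (x - a) i|}) ^ ((N - 1 : ℝ) / N))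
      (𝓝[>] (0 : ℝ)) (𝓝 0) := by
  obtain ⟨C, hC, hiso⟩ := exists_volume_rpow_le_mul_rieszCap hN
  have hmeas : ∀ r t, MeasurableSet {x | x ∈ ball a r ∧
      t * ‖x - a‖ < |u x - u a - ∑ i, v i * (x - a) i|} := fun r t =>
    measurableSet_ball.inter <| measurableSet_lt (f := fun x => t * ‖x - a‖)
      (g := fun x => |u x - u a - ∑ i, v i * (x - a) i|) (by fun_prop) (by fun_prop)
  have hC0 := ENNReal.Tendsto.const_mul hcap (Or.inr hC)
  rw [mul_zero] at hC0
  refine tendsto_of_tendsto_of_tendsto_of_le_of_le tendsto_const_nhds hC0 (fun _ => zero_le)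
    fun r => ?_
  simp only [ENNReal.mul_iSup, mul_left_comm C]
  gcongr
  exact hiso _ (hmeas r _)
end

section
/- Let N ≥ 2 and let μ be a finite (signed) Radon measure on ℝ^N. Then for every t > 0, t · Cap({x ∈ ℝ^N : |∫ |x−y|^{-(N-1)} dμ(y)| > t}) ≤ ‖μ‖, where ‖μ‖ is the total variation norm of μ and the set is restricted to points x where ∫ |x−y|^{-(N-1)} d|μ|(y) < ∞. -/
/-!
Let `E ⊆ {|U^μ| > t}` be compact and `ν` a measure on `E` whose potential `U^ν` is at most `1`.
Since `|U^μ| ≤ U^{|μ|}` pointwise and the kernel is symmetric, Tonelli gives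
`t ν(E) ≤ ∫ U^{|μ|} dν = ∫ U^ν d|μ| ≤ |μ|(ℝ^N)`. Tonelli needs `ν(E) < ∞`, which holds
because the kernel is bounded below on the bounded set `E`.
-/

open MeasureTheory Metric Filter
open scoped ENNReal Topology NNReal

theorem mul_measure_univ_le_of_le_lintegral_kernel {X Y : Type*} [MeasurableSpace X]
    [MeasurableSpace Y] {K : X → Y → ℝ≥0∞} (hK : Measurable (Function.uncurry K))
    {ν : Measure X} {μ : Measure Y} [SFinite ν] [SFinite μ] {c : ℝ≥0∞}
    (hc : ∀ᵐ x ∂ν, c ≤ ∫⁻ y, K x y ∂μ) (hν : ∀ y, ∫⁻ x, K x y ∂ν ≤ 1) :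
    c * ν Set.univ ≤ μ Set.univ :=
  calc c * ν Set.univ = ∫⁻ _, c ∂ν := (lintegral_const c).symm
    _ ≤ ∫⁻ x, ∫⁻ y, K x y ∂μ ∂ν := lintegral_mono_ae hc
    _ = ∫⁻ y, ∫⁻ x, K x y ∂ν ∂μ := lintegral_lintegral_swap hK.aemeasurable
    _ ≤ ∫⁻ _, 1 ∂μ := lintegral_mono hν
    _ = μ Set.univ := lintegral_one

theorem ENNReal.ofReal_rpow_le_coe_rpow (x : ℝ≥0) (r : ℝ) :
    ENNReal.ofReal ((x : ℝ) ^ r) ≤ (x : ℝ≥0∞) ^ r := by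
  rcases eq_or_ne x 0 with rfl | hx
  · rcases eq_or_ne r 0 with rfl | hr
    · simp
    · simp [Real.zero_rpow hr]
  · rw [← NNReal.coe_rpow, ENNReal.ofReal_coe_nnreal, ENNReal.coe_rpow_of_ne_zero hx]

theorem ENNReal.rpow_le_rpow_of_nonpos {x y : ℝ≥0∞} {z : ℝ} (hxy : x ≤ y) (hz : z ≤ 0) :
    y ^ z ≤ x ^ z := by
  obtain ⟨u, hu, rfl⟩ : ∃ u, 0 ≤ u ∧ z = -u := ⟨-z, neg_nonneg.2 hz, (neg_neg z).symm⟩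
  rw [ENNReal.rpow_neg, ENNReal.rpow_neg]
  exact ENNReal.inv_le_inv.2 (ENNReal.rpow_le_rpow hxy hu)

theorem MeasureTheory.SignedMeasure.enorm_integral_posPart_sub_integral_negPart_le {X G : Type*}
    [MeasurableSpace X] [NormedAddCommGroup G] [NormedSpace ℝ G] (μ : SignedMeasure X)
    (f : X → G) :
    ‖(∫ x, f x ∂μ.toJordanDecomposition.posPart) - ∫ x, f x ∂μ.toJordanDecomposition.negPart‖ₑ
      ≤ ∫⁻ x, ‖f x‖ₑ ∂μ.totalVariation :=
  calc _ ≤ ‖∫ x, f x ∂μ.toJordanDecomposition.posPart‖ₑ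
          + ‖∫ x, f x ∂μ.toJordanDecomposition.negPart‖ₑ := enorm_sub_le
    _ ≤ ∫⁻ x, ‖f x‖ₑ ∂μ.toJordanDecomposition.posPart
          + ∫⁻ x, ‖f x‖ₑ ∂μ.toJordanDecomposition.negPart :=
        add_le_add (enorm_integral_le_lintegral_enorm f) (enorm_integral_le_lintegral_enorm f)
    _ = ∫⁻ x, ‖f x‖ₑ ∂μ.totalVariation := (lintegral_add_measure _ _ _).symm

theorem MeasureTheory.SignedMeasure.ofReal_abs_integral_norm_rpow_sub_le {X : Type*}
    [SeminormedAddCommGroup X] [MeasurableSpace X] (μ : SignedMeasure X) (x : X) (r : ℝ) :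
    ENNReal.ofReal |(∫ y, ‖x - y‖ ^ r ∂μ.toJordanDecomposition.posPart)
        - ∫ y, ‖x - y‖ ^ r ∂μ.toJordanDecomposition.negPart|
      ≤ ∫⁻ y, (‖x - y‖₊ : ℝ≥0∞) ^ r ∂μ.totalVariation := by
  rw [← Real.enorm_eq_ofReal_abs]
  refine (μ.enorm_integral_posPart_sub_integral_negPart_le _).trans (lintegral_mono fun y => ?_)
  rw [Real.enorm_eq_ofReal (by positivity)]
  exact ENNReal.ofReal_rpow_le_coe_rpow ‖x - y‖₊ r

section RieszKernel

variable {X : Type*} [SeminormedAddCommGroup X] [MeasurableSpace X] [OpensMeasurableSpace X]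
  {s : ℝ} {ν : Measure X} {x : X}

theorem measure_closedBall_lt_top_of_lintegral_rpow_ne_top (hs : s ≤ 0)
    (hx : ∫⁻ y, (‖x - y‖₊ : ℝ≥0∞) ^ s ∂ν ≠ ∞) (R : ℝ) : ν (closedBall x R) < ∞ := by
  set b : ℝ≥0∞ := ENNReal.ofReal R + 1
  have hb : b ^ s ≠ 0 := by simp [b, ENNReal.rpow_eq_zero_iff]
  have hbound : (closedBall x R).indicator (fun _ => b ^ s) ≤ fun y => (‖x - y‖₊ : ℝ≥0∞) ^ s := by
    intro y
    by_cases hy : y ∈ closedBall x R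
    · have hyb : (‖x - y‖₊ : ℝ≥0∞) ≤ b := by
        rw [mem_closedBall, dist_comm, dist_eq_norm] at hy
        calc (‖x - y‖₊ : ℝ≥0∞) = ENNReal.ofReal ‖x - y‖ := (ofReal_norm _).symm
          _ ≤ ENNReal.ofReal R := ENNReal.ofReal_le_ofReal hy
          _ ≤ b := le_self_add
      rw [Set.indicator_of_mem hy]
      exact ENNReal.rpow_le_rpow_of_nonpos hyb hs
    · simp [hy]
  refine ENNReal.lt_top_of_mul_ne_top_right (ne_top_of_le_ne_top hx ?_) hb
  rw [← lintegral_indicator_const measurableSet_closedBall]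
  exact lintegral_mono hbound

theorem Bornology.IsBounded.measure_lt_top_of_lintegral_rpow_ne_top {E : Set X}
    (hE : Bornology.IsBounded E) (hs : s ≤ 0) (hx : ∫⁻ y, (‖x - y‖₊ : ℝ≥0∞) ^ s ∂ν ≠ ∞) :
    ν E < ∞ := by
  obtain ⟨R, hR⟩ := hE.subset_closedBall x
  exact (measure_mono hR).trans_lt (measure_closedBall_lt_top_of_lintegral_rpow_ne_top hs hx R)

end RieszKernel

/-- The weak type capacitary inequality: for a finite signed Radon measure `μ` on `ℝ^N`,
`t · Cap({x : |(|x|^{-(N-1)} ⋆ μ)(x)| > t}) ≤ ‖μ‖` for every `t > 0`, the set being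
restricted to points where the potential of `|μ|` is finite. -/
theorem weak_type_capacitary_inequality
    (N : ℕ) (hN : 2 ≤ N) (μ : SignedMeasure (EuclideanSpace ℝ (Fin N))) :
    ∀ t : ℝ, 0 < t →
      ENNReal.ofReal t *
          rieszCap N {x |
            Integrable (fun y => ‖x - y‖ ^ (-(N - 1 : ℝ))) μ.totalVariation ∧
            t < |(∫ y, ‖x - y‖ ^ (-(N - 1 : ℝ)) ∂μ.toJordanDecomposition.posPart)
                  - ∫ y, ‖x - y‖ ^ (-(N - 1 : ℝ)) ∂μ.toJordanDecomposition.negPart|} ≤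
        μ.totalVariation Set.univ := by
  intro t _
  have hs : -(N - 1 : ℝ) ≤ 0 := by
    have : (2 : ℝ) ≤ N := by exact_mod_cast hN
    linarith
  rw [rieszCap]
  simp_rw [ENNReal.mul_iSup]
  refine iSup₂_le fun E hE => iSup₂_le fun hEA ν => iSup₂_le fun _ hpot => ?_
  have : IsFiniteMeasure (ν.restrict E) := ⟨by
    simpa using hE.isBounded.measure_lt_top_of_lintegral_rpow_ne_top hs
      ((hpot 0).trans_lt ENNReal.one_lt_top).ne⟩
  have hlevel : ∀ x ∈ E,
      ENNReal.ofReal t ≤ ∫⁻ y, (‖x - y‖₊ : ℝ≥0∞) ^ (-(N - 1 : ℝ)) ∂μ.totalVariation :=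
    fun x hx => (ENNReal.ofReal_le_ofReal (hEA hx).2.le).trans
      (μ.ofReal_abs_integral_norm_rpow_sub_le x _)
  calc ENNReal.ofReal t * ν E = ENNReal.ofReal t * ν.restrict E Set.univ := by
        rw [Measure.restrict_apply_univ]
    _ ≤ μ.totalVariation Set.univ :=
        mul_measure_univ_le_of_le_lintegral_kernel (by fun_prop)
          (ae_restrict_of_forall_mem hE.measurableSet hlevel) fun y =>
            calc ∫⁻ x, (‖x - y‖₊ : ℝ≥0∞) ^ (-(N - 1 : ℝ)) ∂ν.restrict E
                ≤ ∫⁻ x, (‖y - x‖₊ : ℝ≥0∞) ^ (-(N - 1 : ℝ)) ∂ν := by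
                  simp_rw [← nnnorm_neg (_ - y), neg_sub]
                  exact lintegral_mono' Measure.restrict_le_self le_rfl
              _ ≤ 1 := hpot y
end

section
/- Let N ≥ 2. There exists a constant C, depending only on N, such that for every Lebesgue-measurable set E ⊂ ℝ^N one has |E|^{(N-1)/N} ≤ C · Cap(E), where |E| denotes the Lebesgue measure of E. -/
open MeasureTheory Metric Filter
open scoped ENNReal Topology NNReal

/-!
For compact `K`, the measure `volume.restrict K` divided by a bound `D` on its potential is
admissible in the definition of the capacity, so `Cap(K) ≥ |K| / D`. Split the potential at `x`
along the ball `B(x, ρ)` with `ρ = |K|^{1/N}`: in polar coordinates the kernel `|x - y|^{-(N-1)}`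
integrates to `N ω_N ρ` over the ball (`ω_N = |B(0, 1)|`), and off the ball it is at most
`ρ^{-(N-1)}` on a set of measure at most `|K| = ρ^N`. Hence `D = (N ω_N + 1) |K|^{1/N}` works,
giving `|K|^{(N-1)/N} ≤ (N ω_N + 1) Cap(K)`, and inner regularity of Lebesgue measure passes
from compact sets to measurable ones.
-/

open Set Module

theorem lintegral_Ioo_ofReal_rpow {a r : ℝ} (ha : -1 < a) (hr : 0 < r) :
    ∫⁻ t in Ioo 0 r, ENNReal.ofReal (t ^ a) = ENNReal.ofReal (r ^ (a + 1) / (a + 1)) := by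
  rw [← ofReal_integral_eq_lintegral_ofReal
      ((intervalIntegral.integrableOn_Ioo_rpow_iff hr).2 ha)
      (ae_restrict_of_forall_mem measurableSet_Ioo fun t ht => Real.rpow_nonneg ht.1.le a),
    ← integral_Ioc_eq_integral_Ioo, ← intervalIntegral.integral_of_le hr.le,
    integral_rpow (Or.inl ha), Real.zero_rpow (by linarith), sub_zero]

theorem enorm_rpow_neg_le_of_notMem_ball {E : Type*} [SeminormedAddCommGroup E] {s r : ℝ}
    (hs : 0 ≤ s) {x y : E} (hy : y ∉ ball x r) :
    ‖x - y‖ₑ ^ (-s) ≤ ENNReal.ofReal r ^ (-s) := by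
  rw [ENNReal.rpow_neg, ENNReal.rpow_neg, ENNReal.inv_le_inv, ← ofReal_norm]
  refine ENNReal.rpow_le_rpow (ENNReal.ofReal_le_ofReal ?_) hs
  simpa [dist_eq_norm'] using hy

theorem setLIntegral_sdiff_ball_enorm_sub_rpow_neg_le {E : Type*} [SeminormedAddCommGroup E]
    [MeasurableSpace E] (μ : Measure E) {s r : ℝ} (hs : 0 ≤ s) {K : Set E} {x : E} :
    ∫⁻ y in K \ ball x r, ‖x - y‖ₑ ^ (-s) ∂μ ≤ ENNReal.ofReal r ^ (-s) * μ K :=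
  calc ∫⁻ y in K \ ball x r, ‖x - y‖ₑ ^ (-s) ∂μ
      ≤ ∫⁻ _ in K \ ball x r, ENNReal.ofReal r ^ (-s) ∂μ :=
        setLIntegral_mono measurable_const fun _ hy => enorm_rpow_neg_le_of_notMem_ball hs hy.2
    _ ≤ ENNReal.ofReal r ^ (-s) * μ K := by
        rw [setLIntegral_const]; gcongr; exact sdiff_subset

section HaarMeasure

variable {E : Type*} [NormedAddCommGroup E] [NormedSpace ℝ E] [FiniteDimensional ℝ E]
  [MeasurableSpace E] [BorelSpace E] (μ : Measure E) [μ.IsAddHaarMeasure]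

theorem lintegral_fun_norm_addHaar [Nontrivial E] {f : ℝ → ℝ≥0∞} (hf : Measurable f) :
    ∫⁻ x, f ‖x‖ ∂μ = finrank ℝ E * μ (ball 0 1) *
      ∫⁻ t in Ioi 0, ENNReal.ofReal (t ^ (finrank ℝ E - 1)) * f t := by
  calc ∫⁻ x, f ‖x‖ ∂μ = ∫⁻ x : ({0}ᶜ : Set E), f ‖x.1‖ ∂μ.comap (↑) := by
        rw [lintegral_subtype_comap (measurableSet_singleton 0).compl (fun x => f ‖x‖),
          restrict_compl_singleton]
    _ = ∫⁻ p, f p.2 ∂μ.toSphere.prod (.volumeIoiPow (finrank ℝ E - 1)) := by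
        simpa using μ.measurePreserving_homeomorphUnitSphereProd.lintegral_comp_emb
          (Homeomorph.measurableEmbedding _) (fun p => f p.2)
    _ = _ := by
        rw [lintegral_prod _ (by fun_prop)]
        dsimp only
        rw [lintegral_const, Measure.toSphere_apply_univ, Measure.volumeIoiPow,
          lintegral_withDensity_eq_lintegral_mul _ (by fun_prop) (by fun_prop),
          ← lintegral_subtype_comap measurableSet_Ioi]
        exact mul_comm _ _

theorem lintegral_ball_zero_enorm_rpow_neg [Nontrivial E] {s r : ℝ}
    (hs : s < finrank ℝ E) (hr : 0 < r) :
    ∫⁻ y in ball 0 r, ‖y‖ₑ ^ (-s) ∂μ =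
      finrank ℝ E * μ (ball 0 1) * ENNReal.ofReal r ^ (finrank ℝ E - s) /
        ENNReal.ofReal (finrank ℝ E - s) := by
  have h_radial : ∫⁻ y in ball 0 r, ‖y‖ₑ ^ (-s) ∂μ =
      ∫⁻ y, (Iio r).indicator (fun t => ENNReal.ofReal t ^ (-s)) ‖y‖ ∂μ := by
    rw [← lintegral_indicator measurableSet_ball]
    congr 1 with y
    simp [indicator, ofReal_norm]
  have h_density : ∀ t ∈ Ioo 0 r,
      ENNReal.ofReal (t ^ (finrank ℝ E - 1)) * ENNReal.ofReal t ^ (-s) =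
        ENNReal.ofReal (t ^ (finrank ℝ E - s - 1)) := by
    intro t ht
    rw [ENNReal.ofReal_rpow_of_pos ht.1, ← ENNReal.ofReal_mul (pow_nonneg ht.1.le _),
      ← Real.rpow_natCast, ← Real.rpow_add ht.1, Nat.cast_pred finrank_pos]
    ring_nf
  rw [h_radial, lintegral_fun_norm_addHaar μ
    ((by fun_prop : Measurable fun t : ℝ => ENNReal.ofReal t ^ (-s)).indicator measurableSet_Iio)]
  rw [mul_div_assoc]
  congr 1
  simp_rw [← indicator_mul_right _ (fun t => ENNReal.ofReal (t ^ (finrank ℝ E - 1)))]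
  rw [setLIntegral_indicator measurableSet_Iio, inter_comm, Ioi_inter_Iio,
    setLIntegral_congr_fun measurableSet_Ioo h_density,
    lintegral_Ioo_ofReal_rpow (by linarith) hr, sub_add_cancel,
    ENNReal.ofReal_div_of_pos (sub_pos.2 hs), ENNReal.ofReal_rpow_of_pos hr]

theorem setLIntegral_ball_sub_left_eq_self (f : E → ℝ≥0∞) (x : E) (r : ℝ) :
    ∫⁻ y in ball x r, f (x - y) ∂μ = ∫⁻ y in ball 0 r, f y ∂μ := by
  rw [← lintegral_indicator measurableSet_ball, ← lintegral_indicator measurableSet_ball,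
    ← lintegral_sub_left_eq_self _ x]
  congr 1 with y
  simp [indicator]

theorem setLIntegral_enorm_sub_rpow_neg_le [Nontrivial E] {s : ℝ} (hs₀ : 0 ≤ s)
    (hs : s < finrank ℝ E) {K : Set E} (hK : μ K ≠ ∞) (x : E) :
    ∫⁻ y in K, ‖x - y‖ₑ ^ (-s) ∂μ ≤
      (finrank ℝ E * μ (ball 0 1) / ENNReal.ofReal (finrank ℝ E - s) + 1) *
        μ K ^ ((finrank ℝ E - s) / finrank ℝ E) := by
  rcases eq_or_ne (μ K) 0 with hK₀ | hK₀
  · simp [setLIntegral_measure_zero _ _ hK₀]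
  have hm : 0 < (μ K).toReal := ENNReal.toReal_pos hK₀ hK
  have hd : (0 : ℝ) < finrank ℝ E := Nat.cast_pos.2 finrank_pos
  set ρ := (μ K).toReal ^ (1 / (finrank ℝ E : ℝ))
  have hρ : 0 < ρ := Real.rpow_pos_of_pos hm _
  have hρ' : ENNReal.ofReal ρ = μ K ^ (1 / (finrank ℝ E : ℝ)) := by
    rw [← ENNReal.ofReal_rpow_of_pos hm, ENNReal.ofReal_toReal hK]
  have h_near : ∫⁻ y in ball x ρ, ‖x - y‖ₑ ^ (-s) ∂μ =
      finrank ℝ E * μ (ball 0 1) / ENNReal.ofReal (finrank ℝ E - s) *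
        μ K ^ ((finrank ℝ E - s) / finrank ℝ E) := by
    rw [setLIntegral_ball_sub_left_eq_self μ (fun y => ‖y‖ₑ ^ (-s)),
      lintegral_ball_zero_enorm_rpow_neg μ hs hρ, hρ', ← ENNReal.rpow_mul, one_div_mul_eq_div,
      ENNReal.div_eq_inv_mul, ENNReal.div_eq_inv_mul]
    ring
  have h_far : ∫⁻ y in K \ ball x ρ, ‖x - y‖ₑ ^ (-s) ∂μ ≤
      μ K ^ ((finrank ℝ E - s) / finrank ℝ E) :=
    calc ∫⁻ y in K \ ball x ρ, ‖x - y‖ₑ ^ (-s) ∂μ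
        ≤ ENNReal.ofReal ρ ^ (-s) * μ K :=
          setLIntegral_sdiff_ball_enorm_sub_rpow_neg_le μ hs₀
      _ = μ K ^ ((finrank ℝ E - s) / finrank ℝ E) := by
          conv_lhs => enter [2]; rw [← ENNReal.rpow_one (μ K)]
          rw [hρ', ← ENNReal.rpow_mul, ← ENNReal.rpow_add _ _ hK₀ hK]
          congr 1
          field_simp
          ring
  calc ∫⁻ y in K, ‖x - y‖ₑ ^ (-s) ∂μ
      ≤ ∫⁻ y in ball x ρ ∪ K \ ball x ρ, ‖x - y‖ₑ ^ (-s) ∂μ :=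
        lintegral_mono_set (by rw [union_sdiff_self]; exact subset_union_right)
    _ ≤ ∫⁻ y in ball x ρ, ‖x - y‖ₑ ^ (-s) ∂μ +
          ∫⁻ y in K \ ball x ρ, ‖x - y‖ₑ ^ (-s) ∂μ :=
        lintegral_union_le _ _ _
    _ ≤ _ := by rw [h_near, add_mul, one_mul]; gcongr

end HaarMeasure

theorem setLIntegral_nnnorm_sub_rpow_le {N : ℕ} (hN : 1 ≤ N)
    {K : Set (EuclideanSpace ℝ (Fin N))} (hK : volume K ≠ ∞)
    (x : EuclideanSpace ℝ (Fin N)) :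
    ∫⁻ y in K, (‖x - y‖₊ : ℝ≥0∞) ^ (-(N - 1 : ℝ)) ≤
      ENNReal.ofReal (N * volume.real (ball (0 : EuclideanSpace ℝ (Fin N)) 1) + 1) *
        volume K ^ (1 / (N : ℝ)) := by
  have : Nonempty (Fin N) := ⟨⟨0, by omega⟩⟩
  have hN' : (1 : ℝ) ≤ N := by exact_mod_cast hN
  have h := setLIntegral_enorm_sub_rpow_neg_le volume (s := N - 1) (by linarith)
    (by rw [finrank_euclideanSpace_fin]; linarith) hK x
  rw [ENNReal.ofReal_add (by positivity) zero_le_one, ENNReal.ofReal_mul (Nat.cast_nonneg N),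
    ENNReal.ofReal_natCast, measureReal_def, ENNReal.ofReal_toReal measure_ball_lt_top.ne,
    ENNReal.ofReal_one]
  simpa only [finrank_euclideanSpace_fin, sub_sub_cancel, ENNReal.ofReal_one, div_one,
    enorm_eq_nnnorm] using h

theorem measure_div_le_rieszCap {N : ℕ} {A K : Set (EuclideanSpace ℝ (Fin N))}
    (hK : IsCompact K) (hKA : K ⊆ A) (μ : Measure (EuclideanSpace ℝ (Fin N))) {D : ℝ≥0∞}
    (hpot : ∀ x, ∫⁻ y in K, (‖x - y‖₊ : ℝ≥0∞) ^ (-(N - 1 : ℝ)) ∂μ ≤ D) :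
    μ K / D ≤ rieszCap N A := by
  set ν := D⁻¹ • μ.restrict K
  have hν : ν Kᶜ = 0 := by
    simp [ν, Measure.restrict_apply' hK.measurableSet]
  have hν_pot : ∀ x, ∫⁻ y, (‖x - y‖₊ : ℝ≥0∞) ^ (-(N - 1 : ℝ)) ∂ν ≤ 1 := by
    intro x
    rw [lintegral_smul_measure, smul_eq_mul]
    exact (mul_le_mul_right (hpot x) _).trans (ENNReal.inv_mul_le_one D)
  have hνK : ν K = μ K / D := by
    rw [Measure.smul_apply, Measure.restrict_apply_self, smul_eq_mul, ENNReal.div_eq_inv_mul]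
  rw [← hνK]
  exact le_iSup₂_of_le K hK <| le_iSup₂_of_le hKA _ <| le_iSup₂_of_le hν hν_pot le_rfl

theorem volume_rpow_le_mul_rieszCap {N : ℕ} (hN : 2 ≤ N)
    {A K : Set (EuclideanSpace ℝ (Fin N))} (hK : IsCompact K) (hKA : K ⊆ A) :
    volume K ^ ((N - 1 : ℝ) / N) ≤
      ENNReal.ofReal (N * volume.real (ball (0 : EuclideanSpace ℝ (Fin N)) 1) + 1) *
        rieszCap N A := by
  set c := ENNReal.ofReal (N * volume.real (ball (0 : EuclideanSpace ℝ (Fin N)) 1) + 1)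
  have hN' : (2 : ℝ) ≤ N := by exact_mod_cast hN
  rcases eq_or_ne (volume K) 0 with hK₀ | hK₀
  · rw [hK₀, ENNReal.zero_rpow_of_pos (by field_simp; linarith)]
    exact zero_le
  have hKfin : volume K ≠ ∞ := hK.measure_lt_top.ne
  have hc₀ : c ≠ 0 := by simp only [c, ne_eq, ENNReal.ofReal_eq_zero, not_le]; positivity
  have hsplit : volume K = volume K ^ (1 / (N : ℝ)) * volume K ^ ((N - 1 : ℝ) / N) := by
    rw [← ENNReal.rpow_add _ _ hK₀ hKfin, ← add_div, add_sub_cancel, div_self (by positivity),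
      ENNReal.rpow_one]
  calc volume K ^ ((N - 1 : ℝ) / N) = c * (volume K / (c * volume K ^ (1 / (N : ℝ)))) := by
        conv_rhs => enter [2, 1]; rw [hsplit]
        rw [mul_comm c (volume K ^ _),
          ENNReal.mul_div_mul_left _ _ (by simp [hK₀, hKfin]) (by simp [hK₀, hKfin]),
          ENNReal.mul_div_cancel hc₀ ENNReal.ofReal_ne_top]
    _ ≤ c * rieszCap N A := by
        gcongr
        exact measure_div_le_rieszCap hK hKA volume
          (setLIntegral_nnnorm_sub_rpow_le (by omega) hKfin)

/-- For `N ≥ 2` there is a constant `C = C(N)` such that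
`|E|^{(N-1)/N} ≤ C · Cap(E)` for every Lebesgue-measurable set `E ⊆ ℝ^N`. -/
theorem lebesgue_measure_le_capacity
    (N : ℕ) (hN : 2 ≤ N) :
    ∃ C : ℝ, 0 < C ∧ ∀ E : Set (EuclideanSpace ℝ (Fin N)), MeasurableSet E →
      (volume E) ^ ((N - 1 : ℝ) / N) ≤ ENNReal.ofReal C * rieszCap N E := by
  have he : (0 : ℝ) < (N - 1 : ℝ) / N := by
    have hN' : (2 : ℝ) ≤ N := by exact_mod_cast hN
    exact div_pos (by linarith) (by linarith)
  refine ⟨N * volume.real (ball (0 : EuclideanSpace ℝ (Fin N)) 1) + 1, by positivity,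
    fun E hE => ?_⟩
  rw [← ENNReal.le_rpow_inv_iff he, hE.measure_eq_iSup_isCompact]
  refine iSup₂_le fun K hKE => iSup_le fun hK => ?_
  exact (ENNReal.le_rpow_inv_iff he).2 (volume_rpow_le_mul_rieszCap hN hK hKE)
end

section
/- Let N ≥ 2. There exists a constant C, depending only on N, such that for every finite positive Radon measure μ on ℝ^N and every r > 0 one has sup_{t>0} t · Cap({x ∈ B(0,r) : ∫_{{y : 0 < |y| ≤ 2r}} |x−y|^{-(N-1)} |y|^{-1} dμ(y) > t}) ≤ C · r^{N-1} · M(μ)(0). -/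
open MeasureTheory Metric Filter
open scoped ENNReal Topology NNReal

/-- The Hardy–Littlewood maximal function of a (positive) measure:
`M(μ)(x) = sup_{r>0} μ(B(x,r)) / |B(x,r)|`. -/
noncomputable def maxFn {N : ℕ} (μ : Measure (EuclideanSpace ℝ (Fin N)))
    (x : EuclideanSpace ℝ (Fin N)) : ℝ≥0∞ :=
  ⨆ (r : ℝ) (_ : 0 < r), μ (ball x r) / volume (ball x r)

/-!
If `ν` lives on a compact subset of `{U > c}`, where `U` is the Riesz potential of a measure `σ`,
and the potential of `ν` is at most `1`, then by Tonelli and the symmetry of the kernel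
`c ν(E) ≤ ∫ U dν = ∫ (potential of ν) dσ ≤ σ(ℝᴺ)`. Applied to `σ = |y|⁻¹ μ` on
`{0 < |y| ≤ 2r}` this bounds `t · Cap` by `∫_{0<|y|≤2r} |y|⁻¹ dμ`. On a dyadic annulus
`ρ/2 < |y| ≤ ρ` the integrand is at most `2/ρ` and `μ(B(0, 2ρ)) ≲ ρᴺ M(μ)(0)`, so the annulus
contributes `≲ ρᴺ⁻¹ M(μ)(0)`; as `N ≥ 2` these terms form a geometric series in `ρ = 2r/2ᵏ`.
-/

theorem isFiniteMeasure_of_lintegral_rpow_neg_ne_top {X : Type*} [SeminormedAddCommGroup X]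
    [MeasurableSpace X] {ν : Measure X} {E : Set X} (hE : Bornology.IsBounded E)
    (hνE : ν Eᶜ = 0) {s : ℝ} (hs : 0 ≤ s) (x₀ : X)
    (hpot : ∫⁻ y, (‖x₀ - y‖₊ : ℝ≥0∞) ^ (-s) ∂ν ≠ ∞) : IsFiniteMeasure ν := by
  obtain ⟨R, hR, hER⟩ := hE.subset_closedBall_lt 0 x₀
  have hc : ENNReal.ofReal R ^ (-s) ≠ 0 :=
    (ENNReal.rpow_pos (by simpa using hR) ENNReal.ofReal_ne_top).ne'
  have hlow : ENNReal.ofReal R ^ (-s) * ν Set.univ ≤ ∫⁻ y, (‖x₀ - y‖₊ : ℝ≥0∞) ^ (-s) ∂ν := by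
    rw [← lintegral_const]
    refine lintegral_mono_ae ?_
    filter_upwards [measure_eq_zero_iff_ae_notMem.mp hνE] with y hy
    have hyR : (‖x₀ - y‖₊ : ℝ≥0∞) ≤ ENNReal.ofReal R := by
      rw [← ENNReal.ofReal_coe_nnreal, coe_nnnorm, ← dist_eq_norm, dist_comm]
      exact ENNReal.ofReal_le_ofReal (hER (by simpa using hy))
    rw [ENNReal.rpow_neg, ENNReal.rpow_neg]
    exact ENNReal.inv_le_inv.mpr (ENNReal.rpow_le_rpow hyR hs)
  refine ⟨lt_top_iff_ne_top.mpr fun htop => hpot (top_le_iff.mp ?_)⟩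
  simpa [htop, ENNReal.mul_top hc] using hlow

theorem rieszCap_mono {N : ℕ} {A B : Set (EuclideanSpace ℝ (Fin N))} (h : A ⊆ B) :
    rieszCap N A ≤ rieszCap N B :=
  iSup_mono fun _ => iSup_mono fun _ => iSup_const_mono fun hEA => hEA.trans h

theorem mul_rieszCap_setOf_lt_potential_le {N : ℕ} (hN : 1 ≤ N)
    (σ : Measure (EuclideanSpace ℝ (Fin N))) [SFinite σ] (c : ℝ≥0∞) :
    c * rieszCap N {x | c < ∫⁻ y, (‖x - y‖₊ : ℝ≥0∞) ^ (-(N - 1 : ℝ)) ∂σ} ≤ σ Set.univ := by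
  simp only [rieszCap, ENNReal.mul_iSup]
  refine iSup_le fun E => iSup_le fun hEc => iSup_le fun hEU => iSup_le fun ν =>
    iSup_le fun hνE => iSup_le fun hpot => ?_
  -- Tonelli below needs `ν` to be s-finite.
  have : IsFiniteMeasure ν :=
    isFiniteMeasure_of_lintegral_rpow_neg_ne_top hEc.isBounded hνE
      (by simp [hN] : (0 : ℝ) ≤ N - 1) 0 ((hpot 0).trans_lt ENNReal.one_lt_top).ne
  have hkernel : Measurable fun p : EuclideanSpace ℝ (Fin N) × EuclideanSpace ℝ (Fin N) =>
      (‖p.1 - p.2‖₊ : ℝ≥0∞) ^ (-(N - 1 : ℝ)) := by fun_prop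
  calc c * ν E = ∫⁻ _ in E, c ∂ν := (setLIntegral_const E c).symm
    _ ≤ ∫⁻ x in E, ∫⁻ y, (‖x - y‖₊ : ℝ≥0∞) ^ (-(N - 1 : ℝ)) ∂σ ∂ν :=
      setLIntegral_mono' hEc.measurableSet fun x hx => (hEU hx).le
    _ ≤ ∫⁻ x, ∫⁻ y, (‖x - y‖₊ : ℝ≥0∞) ^ (-(N - 1 : ℝ)) ∂σ ∂ν := setLIntegral_le_lintegral _ _
    _ = ∫⁻ y, ∫⁻ x, (‖y - x‖₊ : ℝ≥0∞) ^ (-(N - 1 : ℝ)) ∂ν ∂σ := by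
      rw [lintegral_lintegral_swap hkernel.aemeasurable]
      exact lintegral_congr fun y => lintegral_congr fun x => by rw [← nnnorm_neg, neg_sub]
    _ ≤ ∫⁻ _, 1 ∂σ := lintegral_mono fun y => hpot y
    _ = σ Set.univ := by simp

theorem exists_div_two_lt_le_div_two_pow {x R : ℝ} (hx : 0 < x) (hxR : x ≤ R) :
    ∃ k : ℕ, R / 2 ^ k / 2 < x ∧ x ≤ R / 2 ^ k := by
  obtain ⟨k, hk, hk'⟩ := exists_nat_pow_near ((one_le_div hx).mpr hxR) one_lt_two
  refine ⟨k, ?_, (le_div_comm₀ (by positivity) hx).mp hk⟩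
  rw [div_div, ← pow_succ]
  exact (div_lt_comm₀ hx (by positivity)).mp hk'

theorem tsum_ofReal_div_two_pow_pow_le {d : ℕ} (hd : 2 ≤ d) {R : ℝ} (hR : 0 ≤ R) :
    ∑' k : ℕ, ENNReal.ofReal ((R / 2 ^ k) ^ (d - 1)) ≤ 2 * ENNReal.ofReal (R ^ (d - 1)) := by
  have hterm : ∀ k : ℕ, ENNReal.ofReal ((R / 2 ^ k) ^ (d - 1)) ≤
      2⁻¹ ^ k * ENNReal.ofReal (R ^ (d - 1)) := fun k => by
    have h2k : (2 : ℝ) ^ k ≤ (2 ^ k) ^ (d - 1) := le_self_pow₀ (one_le_pow₀ one_le_two) (by omega)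
    rw [← ENNReal.ofReal_ofNat 2, ← ENNReal.ofReal_inv_of_pos two_pos, ← ENNReal.ofReal_pow
      (by norm_num), ← ENNReal.ofReal_mul (by positivity), inv_pow, inv_mul_eq_div, div_pow]
    exact ENNReal.ofReal_le_ofReal (div_le_div_of_nonneg_left (by positivity) (by positivity) h2k)
  calc ∑' k : ℕ, ENNReal.ofReal ((R / 2 ^ k) ^ (d - 1))
      ≤ ∑' k : ℕ, 2⁻¹ ^ k * ENNReal.ofReal (R ^ (d - 1)) := ENNReal.tsum_le_tsum hterm
    _ = 2 * ENNReal.ofReal (R ^ (d - 1)) := by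
      rw [ENNReal.tsum_mul_right, ENNReal.tsum_geometric, ENNReal.one_sub_inv_two, inv_inv]

section GrowthBound

variable {X : Type*} [NormedAddCommGroup X] [MeasurableSpace X] [OpensMeasurableSpace X]
  {μ : Measure X} {d : ℕ} {A : ℝ≥0∞}

theorem setLIntegral_inv_nnnorm_annulus_le (hd : 1 ≤ d)
    (hμ : ∀ ρ > 0, μ (ball 0 ρ) ≤ A * ENNReal.ofReal (ρ ^ d)) {ρ : ℝ} (hρ : 0 < ρ) :
    ∫⁻ y in {y : X | ρ / 2 < ‖y‖ ∧ ‖y‖ ≤ ρ}, (‖y‖₊ : ℝ≥0∞)⁻¹ ∂μ ≤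
      2 ^ (d + 1) * A * ENNReal.ofReal (ρ ^ (d - 1)) := by
  have hmeas : MeasurableSet {y : X | ρ / 2 < ‖y‖ ∧ ‖y‖ ≤ ρ} :=
    (measurableSet_lt measurable_const measurable_norm).inter
      (measurableSet_le measurable_norm measurable_const)
  have hinv : ∀ y ∈ {y : X | ρ / 2 < ‖y‖ ∧ ‖y‖ ≤ ρ},
      (‖y‖₊ : ℝ≥0∞)⁻¹ ≤ ENNReal.ofReal (2 / ρ) := fun y hy => by
    rw [← ENNReal.ofReal_coe_nnreal, coe_nnnorm, ← inv_div,
      ENNReal.ofReal_inv_of_pos (by positivity)]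
    exact ENNReal.inv_le_inv.mpr (ENNReal.ofReal_le_ofReal hy.1.le)
  have hball : {y : X | ρ / 2 < ‖y‖ ∧ ‖y‖ ≤ ρ} ⊆ ball 0 (2 * ρ) := fun y hy => by
    rw [mem_ball_zero_iff]
    linarith [hy.2]
  have harith : 2 / ρ * (2 * ρ) ^ d = 2 ^ (d + 1) * ρ ^ (d - 1) := by
    obtain ⟨m, rfl⟩ : ∃ m, d = m + 1 := ⟨d - 1, by omega⟩
    rw [Nat.add_sub_cancel]
    field_simp
    ring
  calc ∫⁻ y in {y : X | ρ / 2 < ‖y‖ ∧ ‖y‖ ≤ ρ}, (‖y‖₊ : ℝ≥0∞)⁻¹ ∂μ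
      ≤ ∫⁻ _ in {y : X | ρ / 2 < ‖y‖ ∧ ‖y‖ ≤ ρ}, ENNReal.ofReal (2 / ρ) ∂μ :=
        setLIntegral_mono' hmeas hinv
    _ ≤ ENNReal.ofReal (2 / ρ) * μ (ball 0 (2 * ρ)) := by
      rw [setLIntegral_const]
      gcongr
    _ ≤ ENNReal.ofReal (2 / ρ) * (A * ENNReal.ofReal ((2 * ρ) ^ d)) := by
      gcongr
      exact hμ _ (by positivity)
    _ = 2 ^ (d + 1) * A * ENNReal.ofReal (ρ ^ (d - 1)) := by
      rw [mul_left_comm, ← ENNReal.ofReal_mul (by positivity), harith,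
        ENNReal.ofReal_mul (by positivity), ENNReal.ofReal_pow zero_le_two, ENNReal.ofReal_ofNat]
      ring

theorem setLIntegral_inv_nnnorm_le_of_measure_ball_le (hd : 2 ≤ d)
    (hμ : ∀ ρ > 0, μ (ball 0 ρ) ≤ A * ENNReal.ofReal (ρ ^ d)) {R : ℝ} (hR : 0 < R) :
    ∫⁻ y in {y : X | y ≠ 0 ∧ ‖y‖ ≤ R}, (‖y‖₊ : ℝ≥0∞)⁻¹ ∂μ ≤
      2 ^ (d + 2) * A * ENNReal.ofReal (R ^ (d - 1)) := by
  have hcover : {y : X | y ≠ 0 ∧ ‖y‖ ≤ R} ⊆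
      ⋃ k : ℕ, {y : X | R / 2 ^ k / 2 < ‖y‖ ∧ ‖y‖ ≤ R / 2 ^ k} := fun y hy =>
    Set.mem_iUnion.mpr (exists_div_two_lt_le_div_two_pow (norm_pos_iff.mpr hy.1) hy.2)
  calc ∫⁻ y in {y : X | y ≠ 0 ∧ ‖y‖ ≤ R}, (‖y‖₊ : ℝ≥0∞)⁻¹ ∂μ
      ≤ ∑' k : ℕ, ∫⁻ y in {y : X | R / 2 ^ k / 2 < ‖y‖ ∧ ‖y‖ ≤ R / 2 ^ k},
          (‖y‖₊ : ℝ≥0∞)⁻¹ ∂μ :=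
        (lintegral_mono_set hcover).trans (lintegral_iUnion_le _ _)
    _ ≤ ∑' k : ℕ, 2 ^ (d + 1) * A * ENNReal.ofReal ((R / 2 ^ k) ^ (d - 1)) :=
        ENNReal.tsum_le_tsum fun k =>
          setLIntegral_inv_nnnorm_annulus_le (by omega) hμ (by positivity)
    _ ≤ 2 ^ (d + 1) * A * (2 * ENNReal.ofReal (R ^ (d - 1))) := by
        rw [ENNReal.tsum_mul_left]
        gcongr
        exact tsum_ofReal_div_two_pow_pow_le hd hR.le
    _ = 2 ^ (d + 2) * A * ENNReal.ofReal (R ^ (d - 1)) := by ring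

end GrowthBound

theorem measure_ball_zero_le_maxFn {N : ℕ} (μ : Measure (EuclideanSpace ℝ (Fin N))) {ρ : ℝ}
    (hρ : 0 < ρ) :
    μ (ball 0 ρ) ≤
      maxFn μ 0 * volume (ball (0 : EuclideanSpace ℝ (Fin N)) 1) * ENNReal.ofReal (ρ ^ N) := by
  have hratio : μ (ball 0 ρ) / volume (ball (0 : EuclideanSpace ℝ (Fin N)) ρ) ≤ maxFn μ 0 :=
    le_iSup₂ (f := fun r (_ : 0 < r) => μ (ball 0 r) / volume (ball 0 r)) ρ hρ
  rw [ENNReal.div_le_iff (measure_ball_pos volume 0 hρ).ne' measure_ball_lt_top.ne,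
    Measure.addHaar_ball_of_pos volume _ hρ, finrank_euclideanSpace_fin] at hratio
  exact hratio.trans_eq (by ring)

/-- For `N ≥ 2` there is `C = C(N)` such that for every finite positive Radon measure `μ`
and every `r > 0`, the weak capacitary estimate
`sup_{t>0} t · Cap({x ∈ B(0,r) : ∫_{0<|y|≤2r} |x−y|^{-(N-1)} |y|^{-1} dμ(y) > t})
  ≤ C · r^{N-1} · M(μ)(0)` holds. -/
theorem weak_capacitary_estimate_for_term_B
    (N : ℕ) (hN : 2 ≤ N) :
    ∃ C : ℝ, 0 < C ∧ ∀ μ : Measure (EuclideanSpace ℝ (Fin N)), IsFiniteMeasure μ →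
      ∀ r : ℝ, 0 < r →
        (⨆ (t : ℝ) (_ : 0 < t), ENNReal.ofReal t *
            rieszCap N {x | x ∈ ball (0 : EuclideanSpace ℝ (Fin N)) r ∧
              ENNReal.ofReal t <
                ∫⁻ y in {y : EuclideanSpace ℝ (Fin N) | y ≠ 0 ∧ ‖y‖ ≤ 2 * r},
                  (‖x - y‖₊ : ℝ≥0∞) ^ (-(N - 1 : ℝ)) * (‖y‖₊ : ℝ≥0∞)⁻¹ ∂μ}) ≤
          ENNReal.ofReal C * ENNReal.ofReal (r ^ (N - 1)) * maxFn μ 0 := by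
  set V := volume (ball (0 : EuclideanSpace ℝ (Fin N)) 1)
  have hV : 0 < V.toReal := ENNReal.toReal_pos (measure_ball_pos _ _ one_pos).ne'
    measure_ball_lt_top.ne
  refine ⟨2 ^ (N + 2) * 2 ^ (N - 1) * V.toReal, by positivity, fun μ _ r hr => ?_⟩
  set S := {y : EuclideanSpace ℝ (Fin N) | y ≠ 0 ∧ ‖y‖ ≤ 2 * r}
  set σ := (μ.restrict S).withDensity fun y => (‖y‖₊ : ℝ≥0∞)⁻¹
  have hpot : ∀ x, ∫⁻ y in S, (‖x - y‖₊ : ℝ≥0∞) ^ (-(N - 1 : ℝ)) * (‖y‖₊ : ℝ≥0∞)⁻¹ ∂μ =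
      ∫⁻ y, (‖x - y‖₊ : ℝ≥0∞) ^ (-(N - 1 : ℝ)) ∂σ := fun x => by
    rw [lintegral_withDensity_eq_lintegral_mul _ (by fun_prop) (by fun_prop)]
    simp only [Pi.mul_apply, mul_comm]
  refine iSup₂_le fun t _ => ?_
  calc ENNReal.ofReal t * rieszCap N {x | x ∈ ball 0 r ∧ ENNReal.ofReal t <
        ∫⁻ y in S, (‖x - y‖₊ : ℝ≥0∞) ^ (-(N - 1 : ℝ)) * (‖y‖₊ : ℝ≥0∞)⁻¹ ∂μ}
      ≤ ENNReal.ofReal t * rieszCap N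
          {x | ENNReal.ofReal t < ∫⁻ y, (‖x - y‖₊ : ℝ≥0∞) ^ (-(N - 1 : ℝ)) ∂σ} := by
        gcongr
        exact rieszCap_mono fun x hx => (hpot x).symm.trans_gt hx.2
    _ ≤ σ Set.univ := mul_rieszCap_setOf_lt_potential_le (by omega) σ _
    _ = ∫⁻ y in S, (‖y‖₊ : ℝ≥0∞)⁻¹ ∂μ := by
        rw [withDensity_apply _ MeasurableSet.univ, Measure.restrict_univ]
    _ ≤ 2 ^ (N + 2) * (maxFn μ 0 * V) * ENNReal.ofReal ((2 * r) ^ (N - 1)) :=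
        setLIntegral_inv_nnnorm_le_of_measure_ball_le hN
          (fun ρ hρ => measure_ball_zero_le_maxFn μ hρ) (by positivity)
    _ = ENNReal.ofReal (2 ^ (N + 2) * 2 ^ (N - 1) * V.toReal) * ENNReal.ofReal (r ^ (N - 1)) *
          maxFn μ 0 := by
        rw [mul_pow, ENNReal.ofReal_mul (by positivity), ENNReal.ofReal_mul (by positivity),
          ENNReal.ofReal_mul (by positivity), ENNReal.ofReal_toReal measure_ball_lt_top.ne]
        simp only [ENNReal.ofReal_pow zero_le_two, ENNReal.ofReal_ofNat]
        ring
end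

section
/- Let N ≥ 2 and let K satisfy the kernel condition. There exists a constant C, depending only on N and C₀, such that for every finite positive Radon measure μ on ℝ^N and all points x, y ∈ ℝ^N with r := |x−y| > 0, one has |∫_{{w : |w−x| ≥ 2r}} (K(y−w) − K(x−w) − ∇K(x−w)·(y−x)) dμ(w)| ≤ C · |x−y| · M(μ)(x). -/
/-!
If `‖w - x‖ ≥ 2‖x - y‖`, the segment from `x - w` to `y - w` stays at distance at least
`‖w - x‖ / 2` from the origin, so the bound on `∇²K` makes the second-order Taylor remainder
`O(‖x - y‖² / ‖w - x‖^(N+1))`. Cutting the region `‖w - x‖ ≥ s` into dyadic annuli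
`2^k s ≤ ‖w - x‖ < 2^(k+1) s`, the `k`-th annulus contributes at most
`(2^k s)^(-(N+1)) μ(B(x, 2^(k+1) s)) ≲ 2^(-k) s⁻¹ M(μ)(x)`; summing the geometric series with
`s = 2‖x - y‖` gives the bound.
-/

open MeasureTheory Metric Filter
open scoped ENNReal Topology NNReal

/-- The kernel condition: `K` is twice continuously differentiable off the origin
and `|∇^j K(x)| ≤ C₀ |x|^{-(N-1+j)}` for `j = 0, 1, 2` and all `x ≠ 0`. -/
def KernelCond (N : ℕ) (C₀ : ℝ) (K : EuclideanSpace ℝ (Fin N) → ℝ) : Prop :=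
  ContDiffOn ℝ 2 K {(0 : EuclideanSpace ℝ (Fin N))}ᶜ ∧
    ∀ j : ℕ, j ≤ 2 → ∀ x : EuclideanSpace ℝ (Fin N), x ≠ 0 →
      ‖iteratedFDeriv ℝ j K x‖ ≤ C₀ * ‖x‖ ^ (-(N - 1 + j : ℝ))

section TaylorRemainder

variable {E F : Type*} [NormedAddCommGroup E] [NormedSpace ℝ E]
  [NormedAddCommGroup F] [NormedSpace ℝ F]

theorem norm_sub_sub_fderiv_le_of_norm_iteratedFDeriv_two_le {f : E → F} {a b : E} {C : ℝ}
    (hf : ∀ z ∈ segment ℝ a b, ContDiffAt ℝ 2 f z)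
    (hC : ∀ z ∈ segment ℝ a b, ‖iteratedFDeriv ℝ 2 f z‖ ≤ C) :
    ‖f b - f a - fderiv ℝ f a (b - a)‖ ≤ C * ‖b - a‖ ^ 2 := by
  have hf' (z) (hz : z ∈ segment ℝ a b) : HasFDerivWithinAt f (fderiv ℝ f z) (segment ℝ a b) z :=
    ((hf z hz).differentiableAt two_ne_zero).hasFDerivAt.hasFDerivWithinAt
  have hf'' (z) (hz : z ∈ segment ℝ a b) :
      HasFDerivWithinAt (fderiv ℝ f) (fderiv ℝ (fderiv ℝ f) z) (segment ℝ a b) z :=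
    (((hf z hz).fderiv_right le_rfl).differentiableAt one_ne_zero).hasFDerivAt.hasFDerivWithinAt
  have hf''_le (z) (hz : z ∈ segment ℝ a b) : ‖fderiv ℝ (fderiv ℝ f) z‖ ≤ C := by
    rw [← norm_iteratedFDeriv_zero (𝕜 := ℝ) (f := fderiv ℝ (fderiv ℝ f)),
      norm_iteratedFDeriv_fderiv, norm_iteratedFDeriv_fderiv]
    exact hC z hz
  have hC_nonneg : 0 ≤ C := (norm_nonneg _).trans (hC a (left_mem_segment ℝ a b))
  have hf'_sub_le (z) (hz : z ∈ segment ℝ a b) : ‖fderiv ℝ f z - fderiv ℝ f a‖ ≤ C * ‖b - a‖ :=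
    calc ‖fderiv ℝ f z - fderiv ℝ f a‖ ≤ C * ‖z - a‖ :=
          (convex_segment a b).norm_image_sub_le_of_norm_hasFDerivWithin_le hf'' hf''_le
            (left_mem_segment ℝ a b) hz
      _ ≤ C * ‖b - a‖ := by gcongr; exact norm_sub_le_of_mem_segment hz
  calc ‖f b - f a - fderiv ℝ f a (b - a)‖ ≤ C * ‖b - a‖ * ‖b - a‖ :=
        (convex_segment a b).norm_image_sub_le_of_norm_hasFDerivWithin_le' hf' hf'_sub_le
          (left_mem_segment ℝ a b) (right_mem_segment ℝ a b)
    _ = C * ‖b - a‖ ^ 2 := by ring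

end TaylorRemainder

theorem EuclideanSpace.sum_gradient_mul_eq_fderiv {ι : Type*} [Fintype ι]
    (f : EuclideanSpace ℝ ι → ℝ) (a v : EuclideanSpace ℝ ι) :
    ∑ i, gradient f a i * v i = fderiv ℝ f a v := by
  rw [← toDual_gradient, InnerProductSpace.toDual_apply_apply, PiLp.inner_apply]
  simp [mul_comm]

namespace KernelCond

variable {N : ℕ} {C₀ : ℝ} {K : EuclideanSpace ℝ (Fin N) → ℝ}

theorem mono (hK : KernelCond N C₀ K) {C₁ : ℝ} (h : C₀ ≤ C₁) : KernelCond N C₁ K :=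
  ⟨hK.1, fun j hj x hx => (hK.2 j hj x hx).trans (by gcongr)⟩

theorem contDiffAt (hK : KernelCond N C₀ K) {z : EuclideanSpace ℝ (Fin N)} (hz : z ≠ 0) :
    ContDiffAt ℝ 2 K z :=
  hK.1.contDiffAt (isOpen_compl_singleton.mem_nhds hz)

theorem norm_iteratedFDeriv_two_le (hK : KernelCond N C₀ K) {z : EuclideanSpace ℝ (Fin N)}
    (hz : z ≠ 0) : ‖iteratedFDeriv ℝ 2 K z‖ ≤ C₀ / ‖z‖ ^ (N + 1) := by
  have h := hK.2 2 le_rfl z hz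
  rwa [Real.rpow_neg (norm_nonneg z), show (N - 1 + (2 : ℕ) : ℝ) = (N + 1 : ℕ) by push_cast; ring,
    Real.rpow_natCast, ← div_eq_mul_inv] at h

theorem abs_sub_sub_fderiv_le (hK : KernelCond N C₀ K) {a v : EuclideanSpace ℝ (Fin N)}
    (ha : a ≠ 0) (hav : 2 * ‖v‖ ≤ ‖a‖) :
    |K (a + v) - K a - fderiv ℝ K a v| ≤ 2 ^ (N + 1) * C₀ * ‖v‖ ^ 2 / ‖a‖ ^ (N + 1) := by
  have ha₀ : 0 < ‖a‖ := norm_pos_iff.mpr ha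
  have hC₀ : 0 ≤ C₀ := by
    have h := mul_nonneg ((norm_nonneg _).trans (hK.norm_iteratedFDeriv_two_le ha))
      (pow_pos ha₀ (N + 1)).le
    rwa [div_mul_cancel₀ _ (pow_pos ha₀ (N + 1)).ne'] at h
  have hseg (z) (hz : z ∈ segment ℝ a (a + v)) : ‖a‖ / 2 ≤ ‖z‖ := by
    have h₁ := norm_sub_le_of_mem_segment hz
    have h₂ := norm_sub_norm_le a z
    rw [add_sub_cancel_left] at h₁
    rw [norm_sub_rev] at h₂
    linarith
  have hz₀ (z) (hz : z ∈ segment ℝ a (a + v)) : z ≠ 0 :=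
    norm_pos_iff.mp ((half_pos ha₀).trans_le (hseg z hz))
  have hbound (z) (hz : z ∈ segment ℝ a (a + v)) :
      ‖iteratedFDeriv ℝ 2 K z‖ ≤ 2 ^ (N + 1) * C₀ / ‖a‖ ^ (N + 1) :=
    calc ‖iteratedFDeriv ℝ 2 K z‖ ≤ C₀ / ‖z‖ ^ (N + 1) := hK.norm_iteratedFDeriv_two_le (hz₀ z hz)
      _ ≤ C₀ / (‖a‖ / 2) ^ (N + 1) := by gcongr; exact hseg z hz
      _ = 2 ^ (N + 1) * C₀ / ‖a‖ ^ (N + 1) := by rw [div_pow]; field_simp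
  have h := norm_sub_sub_fderiv_le_of_norm_iteratedFDeriv_two_le
    (fun z hz => hK.contDiffAt (hz₀ z hz)) hbound
  rw [add_sub_cancel_left, Real.norm_eq_abs] at h
  exact h.trans_eq (by ring)

end KernelCond

section MaximalFunction

variable {N : ℕ} (μ : Measure (EuclideanSpace ℝ (Fin N))) (x : EuclideanSpace ℝ (Fin N))

theorem measure_ball_le_volume_mul_maxFn {R : ℝ} (hR : 0 < R) :
    μ (ball x R) ≤ volume (ball x R) * maxFn μ x := by
  rw [mul_comm, ← ENNReal.div_le_iff (measure_ball_pos volume x hR).ne' measure_ball_lt_top.ne]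
  exact le_iSup₂ (f := fun r (_ : 0 < r) => μ (ball x r) / volume (ball x r)) R hR

def dyadicAnnulus (s : ℝ) (k : ℕ) : Set (EuclideanSpace ℝ (Fin N)) :=
  {w | 2 ^ k * s ≤ ‖w - x‖} ∩ ball x (2 ^ (k + 1) * s)

variable {x} in
theorem subset_iUnion_dyadicAnnulus {s : ℝ} (hs : 0 < s) :
    {w | s ≤ ‖w - x‖} ⊆ ⋃ k, dyadicAnnulus x s k := by
  intro w hw
  obtain ⟨k, hk, hk'⟩ := exists_nat_pow_near ((one_le_div hs).mpr hw) one_lt_two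
  exact Set.mem_iUnion.mpr
    ⟨k, (le_div_iff₀ hs).mp hk, mem_ball_iff_norm.mpr ((div_lt_iff₀ hs).mp hk')⟩

theorem setLIntegral_dyadicAnnulus_le {s : ℝ} (hs : 0 < s) (k : ℕ) :
    ∫⁻ w in dyadicAnnulus x s k, ENNReal.ofReal (‖w - x‖ ^ (N + 1))⁻¹ ∂μ ≤
      ENNReal.ofReal (2 ^ N / s) * 2⁻¹ ^ k * volume (ball (0 : EuclideanSpace ℝ (Fin N)) 1) *
        maxFn μ x := by
  have hr : 0 < 2 ^ k * s := by positivity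
  have hmeas : MeasurableSet (dyadicAnnulus x s k) := by
    unfold dyadicAnnulus; measurability
  have hle (w) (hw : w ∈ dyadicAnnulus x s k) :
      ENNReal.ofReal (‖w - x‖ ^ (N + 1))⁻¹ ≤ ENNReal.ofReal ((2 ^ k * s) ^ (N + 1))⁻¹ := by
    gcongr
    exact hw.1
  calc ∫⁻ w in dyadicAnnulus x s k, ENNReal.ofReal (‖w - x‖ ^ (N + 1))⁻¹ ∂μ
      ≤ ENNReal.ofReal ((2 ^ k * s) ^ (N + 1))⁻¹ * μ (dyadicAnnulus x s k) :=
        (setLIntegral_mono' hmeas hle).trans_eq (setLIntegral_const _ _)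
    _ ≤ ENNReal.ofReal ((2 ^ k * s) ^ (N + 1))⁻¹ *
          (volume (ball x (2 ^ (k + 1) * s)) * maxFn μ x) := by
        gcongr
        exact (measure_mono Set.inter_subset_right).trans
          (measure_ball_le_volume_mul_maxFn μ x (by positivity))
    _ = _ := by
        have h2 : (2⁻¹ : ℝ≥0∞) ^ k = ENNReal.ofReal (2⁻¹ ^ k) := by
          rw [ENNReal.ofReal_pow (by norm_num), ENNReal.ofReal_inv_of_pos two_pos,
            ENNReal.ofReal_ofNat]
        rw [Measure.addHaar_ball_of_pos _ _ (by positivity), finrank_euclideanSpace_fin, h2,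
          ← ENNReal.ofReal_mul (by positivity), ← mul_assoc, ← mul_assoc,
          ← ENNReal.ofReal_mul (by positivity)]
        congr 3
        rw [inv_pow]
        field_simp
        ring

theorem setLIntegral_inv_pow_le_maxFn {s : ℝ} (hs : 0 < s) :
    ∫⁻ w in {w | s ≤ ‖w - x‖}, ENNReal.ofReal (‖w - x‖ ^ (N + 1))⁻¹ ∂μ ≤
      ENNReal.ofReal (2 ^ (N + 1) / s) * volume (ball (0 : EuclideanSpace ℝ (Fin N)) 1) *
        maxFn μ x :=
  calc ∫⁻ w in {w | s ≤ ‖w - x‖}, ENNReal.ofReal (‖w - x‖ ^ (N + 1))⁻¹ ∂μ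
      ≤ ∑' k, ∫⁻ w in dyadicAnnulus x s k, ENNReal.ofReal (‖w - x‖ ^ (N + 1))⁻¹ ∂μ :=
        (lintegral_mono_set (subset_iUnion_dyadicAnnulus hs)).trans (lintegral_iUnion_le _ _)
    _ ≤ ∑' k : ℕ, ENNReal.ofReal (2 ^ N / s) * 2⁻¹ ^ k *
          volume (ball (0 : EuclideanSpace ℝ (Fin N)) 1) * maxFn μ x :=
        ENNReal.tsum_le_tsum (setLIntegral_dyadicAnnulus_le μ x hs)
    _ = _ := by
        simp only [ENNReal.tsum_mul_right, ENNReal.tsum_mul_left, ENNReal.tsum_geometric,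
          ENNReal.one_sub_inv_two, inv_inv]
        have h2 : ENNReal.ofReal (2 ^ N / s) * 2 = ENNReal.ofReal (2 ^ (N + 1) / s) := by
          rw [← ENNReal.ofReal_ofNat 2, ← ENNReal.ofReal_mul (by positivity)]
          ring_nf
        rw [h2]

theorem enorm_setIntegral_le_maxFn {f : EuclideanSpace ℝ (Fin N) → ℝ} {s A : ℝ} (hs : 0 < s)
    (hA : 0 ≤ A) (hf : ∀ w, s ≤ ‖w - x‖ → |f w| ≤ A / ‖w - x‖ ^ (N + 1)) :
    ‖∫ w in {w | s ≤ ‖w - x‖}, f w ∂μ‖ₑ ≤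
      ENNReal.ofReal (2 ^ (N + 1) * A / s) * volume (ball (0 : EuclideanSpace ℝ (Fin N)) 1) *
        maxFn μ x := by
  have hmeas : MeasurableSet {w | s ≤ ‖w - x‖} := by measurability
  have hf' (w) (hw : w ∈ {w | s ≤ ‖w - x‖}) :
      ‖f w‖ₑ ≤ ENNReal.ofReal A * ENNReal.ofReal (‖w - x‖ ^ (N + 1))⁻¹ := by
    rw [Real.enorm_eq_ofReal_abs, ← ENNReal.ofReal_mul hA, ← div_eq_mul_inv]
    exact ENNReal.ofReal_le_ofReal (hf w hw)
  calc ‖∫ w in {w | s ≤ ‖w - x‖}, f w ∂μ‖ₑ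
      ≤ ∫⁻ w in {w | s ≤ ‖w - x‖}, ‖f w‖ₑ ∂μ := enorm_integral_le_lintegral_enorm _
    _ ≤ ENNReal.ofReal A * ∫⁻ w in {w | s ≤ ‖w - x‖}, ENNReal.ofReal (‖w - x‖ ^ (N + 1))⁻¹ ∂μ :=
        (setLIntegral_mono' hmeas hf').trans_eq (lintegral_const_mul' _ _ ENNReal.ofReal_ne_top)
    _ ≤ ENNReal.ofReal A * (ENNReal.ofReal (2 ^ (N + 1) / s) *
          volume (ball (0 : EuclideanSpace ℝ (Fin N)) 1) * maxFn μ x) := by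
        gcongr
        exact setLIntegral_inv_pow_le_maxFn μ x hs
    _ = _ := by
        rw [← mul_assoc, ← mul_assoc, ← ENNReal.ofReal_mul hA]
        congr 3
        ring

end MaximalFunction

theorem taylor_remainder_term_estimate_general
    (N : ℕ) (C₀ : ℝ)
    (K : EuclideanSpace ℝ (Fin N) → ℝ) (hK : KernelCond N C₀ K) :
    ∃ C : ℝ, 0 < C ∧ ∀ μ : Measure (EuclideanSpace ℝ (Fin N)), IsFiniteMeasure μ →
      ∀ x y : EuclideanSpace ℝ (Fin N), x ≠ y →
        ENNReal.ofReal
            |∫ w in {w : EuclideanSpace ℝ (Fin N) | 2 * ‖x - y‖ ≤ ‖w - x‖},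
              (K (y - w) - K (x - w) - ∑ i, gradient K (x - w) i * (y - x) i) ∂μ| ≤
          ENNReal.ofReal (C * ‖x - y‖) * maxFn μ x := by
  set C₁ := max C₀ 1
  have hK₁ : KernelCond N C₁ K := hK.mono (le_max_left _ _)
  set V := (volume (ball (0 : EuclideanSpace ℝ (Fin N)) 1)).toReal
  have hV : 0 < V :=
    ENNReal.toReal_pos (measure_ball_pos volume 0 one_pos).ne' measure_ball_lt_top.ne
  refine ⟨2 ^ (2 * N + 1) * C₁ * V, by positivity, fun μ _ x y hxy => ?_⟩
  have hr : 0 < ‖x - y‖ := norm_sub_pos_iff.mpr hxy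
  have hpt (w) (hw : 2 * ‖x - y‖ ≤ ‖w - x‖) :
      |K (y - w) - K (x - w) - ∑ i, gradient K (x - w) i * (y - x) i| ≤
        2 ^ (N + 1) * C₁ * ‖x - y‖ ^ 2 / ‖w - x‖ ^ (N + 1) := by
    have ha : x - w ≠ 0 := norm_pos_iff.mp (by rw [norm_sub_rev]; linarith)
    rw [norm_sub_rev w x, norm_sub_rev x y] at hw ⊢
    have h := hK₁.abs_sub_sub_fderiv_le ha hw
    rwa [sub_add_sub_cancel', ← EuclideanSpace.sum_gradient_mul_eq_fderiv] at h
  rw [← Real.enorm_eq_ofReal_abs]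
  calc _ ≤ ENNReal.ofReal (2 ^ (N + 1) * (2 ^ (N + 1) * C₁ * ‖x - y‖ ^ 2) / (2 * ‖x - y‖)) *
          volume (ball (0 : EuclideanSpace ℝ (Fin N)) 1) * maxFn μ x :=
        enorm_setIntegral_le_maxFn μ x (by positivity) (by positivity) hpt
    _ = _ := by
        rw [← ENNReal.ofReal_toReal measure_ball_lt_top.ne, ← ENNReal.ofReal_mul (by positivity)]
        congr 2
        field_simp
        ring

/-- Second-order Taylor remainder estimate: for a kernel `K` satisfying the kernel
condition there is `C = C(N, C₀)` such that for every finite positive Radon measure `μ`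
and all `x ≠ y` (with `r = |x−y|`),
`|∫_{|w−x|≥2r} (K(y−w) − K(x−w) − ∇K(x−w)·(y−x)) dμ(w)| ≤ C |x−y| M(μ)(x)`. -/
theorem taylor_remainder_term_estimate
    (N : ℕ) (hN : 2 ≤ N) (C₀ : ℝ)
    (K : EuclideanSpace ℝ (Fin N) → ℝ) (hK : KernelCond N C₀ K) :
    ∃ C : ℝ, 0 < C ∧ ∀ μ : Measure (EuclideanSpace ℝ (Fin N)), IsFiniteMeasure μ →
      ∀ x y : EuclideanSpace ℝ (Fin N), x ≠ y →
        ENNReal.ofReal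
            |∫ w in {w : EuclideanSpace ℝ (Fin N) | 2 * ‖x - y‖ ≤ ‖w - x‖},
              (K (y - w) - K (x - w) - ∑ i, gradient K (x - w) i * (y - x) i) ∂μ| ≤
          ENNReal.ofReal (C * ‖x - y‖) * maxFn μ x :=
  taylor_remainder_term_estimate_general N C₀ K hK
end

section
/- Let N ≥ 2, let K satisfy the kernel condition, and let φ be an even continuously differentiable function on ℝ^N with compact support in the closed unit ball and ∫ φ = 1; set φ_r(z) = r^{-N} φ(z/r). There exists a constant C, depending only on N, C₀ and φ, such that for every finite positive Radon measure μ, every r > 0, and all x, y ∈ ℝ^N with |x−y| = r, if μ is supported in the ball B(x,2r) then |(K⋆μ⋆φ_r)(x) − (K⋆μ⋆φ_r)(y)| ≤ C · |x−y| · M(μ)(x). -/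
open MeasureTheory Metric Filter
open scoped ENNReal Topology NNReal

/-!
Both mollified values are bounded separately; no cancellation between them is needed. For
`|p - x| ≤ r`, the bump `φ_r(p - ·)` is bounded by `‖φ‖∞ r⁻ᴺ` and supported in `B̄(p, r)`, so
`|(K⋆μ⋆φ_r)(p)| ≤ ‖φ‖∞ r⁻ᴺ C₀ ∫ ∫_{B̄(p,r)} |z - w|^{1-N} dz dμ(w)` by Tonelli. Every `w` in the
support of `μ` lies within `3r` of `p`, so the inner integral is at most the integral of
`|u|^{1-N}` over `B(0, 4r)`, which polar coordinates evaluate to `4 N |B(0,1)| r`. Finally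
`μ(ℝᴺ) = μ(B(x, 2r)) ≤ |B(x, 2r)| M(μ)(x) = 2ᴺ rᴺ |B(0,1)| M(μ)(x)`, and the powers of `r`
cancel down to the single factor `r = |x - y|`.
-/

open Set

section HaarIntegrals

variable {E : Type*} [NormedAddCommGroup E] [NormedSpace ℝ E] [FiniteDimensional ℝ E]
  [MeasurableSpace E] [BorelSpace E] [Nontrivial E] (μ : Measure E) [μ.IsAddHaarMeasure]

theorem integral_ball_norm_rpow_neg_finrank_sub_one {R : ℝ} (hR : 0 ≤ R) :
    ∫ u in ball (0 : E) R, ‖u‖ ^ (-((Module.finrank ℝ E : ℝ) - 1)) ∂μ =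
      Module.finrank ℝ E * μ.real (ball 0 1) * R := by
  set d := Module.finrank ℝ E
  have hd : 1 ≤ d := Module.finrank_pos
  have hind : (ball (0 : E) R).indicator (fun u => ‖u‖ ^ (-((d : ℝ) - 1))) =
      fun u => (Iio R).indicator (fun t => t ^ (-((d : ℝ) - 1))) ‖u‖ := by
    ext u; by_cases hu : ‖u‖ < R <;> simp [hu]
  rw [← integral_indicator measurableSet_ball, hind, integral_fun_norm_addHaar, nsmul_eq_mul,
    smul_eq_mul, mul_assoc]
  congr 2
  have hcancel : ∀ y ∈ Ioi (0 : ℝ), y ^ (d - 1) • (Iio R).indicator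
      (fun t => t ^ (-((d : ℝ) - 1))) y = (Iio R).indicator 1 y := by
    intro y hy
    by_cases hyR : y ∈ Iio R
    · rw [indicator_of_mem hyR, indicator_of_mem hyR, smul_eq_mul, Real.rpow_neg (le_of_lt hy),
        show (d : ℝ) - 1 = ((d - 1 : ℕ) : ℝ) by push_cast [hd]; ring, Real.rpow_natCast,
        Pi.one_apply, mul_inv_cancel₀ (pow_ne_zero _ (ne_of_gt hy))]
    · simp [hyR]
  rw [setIntegral_congr_fun measurableSet_Ioi hcancel, integral_indicator measurableSet_Iio,
    Measure.restrict_restrict measurableSet_Iio, Iio_inter_Ioi]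
  simp [hR]

theorem lintegral_ball_enorm_rpow_neg_finrank_sub_one {R : ℝ} (hR : 0 ≤ R) :
    ∫⁻ u in ball (0 : E) R, ‖u‖ₑ ^ (-((Module.finrank ℝ E : ℝ) - 1)) ∂μ =
      ENNReal.ofReal (Module.finrank ℝ E * μ.real (ball 0 1) * R) := by
  set e : ℝ := -((Module.finrank ℝ E : ℝ) - 1)
  have hint : IntegrableOn (fun u : E => ‖u‖ ^ e) (ball 0 R) μ :=
    integrableOn_ball_of_norm_le_rpow Module.finrank_pos (C := 1)
      (α := Module.finrank ℝ E - 1) (by linarith)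
      (ae_of_all _ fun u => by simp [e, abs_of_nonneg (Real.rpow_nonneg (norm_nonneg u) _)])
      (measurable_norm.pow_const e).aestronglyMeasurable
  rw [← integral_ball_norm_rpow_neg_finrank_sub_one μ hR,
    ofReal_integral_eq_lintegral_ofReal hint (ae_of_all _ fun u => by positivity)]
  refine lintegral_congr_ae (ae_restrict_of_ae ?_)
  filter_upwards [compl_mem_ae_iff.2 (measure_singleton (μ := μ) (0 : E))] with u hu
  rw [← ofReal_norm, ENNReal.ofReal_rpow_of_pos (norm_pos_iff.2 hu)]

theorem lintegral_ball_enorm_sub_rpow_neg_finrank_sub_one (w : E) {R : ℝ} (hR : 0 ≤ R) :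
    ∫⁻ z in ball w R, ‖z - w‖ₑ ^ (-((Module.finrank ℝ E : ℝ) - 1)) ∂μ =
      ENNReal.ofReal (Module.finrank ℝ E * μ.real (ball 0 1) * R) := by
  rw [← lintegral_ball_enorm_rpow_neg_finrank_sub_one μ hR,
    ← lintegral_indicator measurableSet_ball, ← lintegral_indicator measurableSet_ball]
  refine Eq.trans ?_ (lintegral_sub_right_eq_self _ w)
  congr 1
  ext z
  simp [indicator, dist_eq_norm]

theorem lintegral_closedBall_lintegral_enorm_sub_rpow_le (ν : Measure E) [SFinite ν]
    {p q : E} {ρ s : ℝ} (hρ : 0 ≤ ρ) (hν : ν (ball q s)ᶜ = 0) :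
    ∫⁻ z in closedBall p ρ, ∫⁻ w, ‖z - w‖ₑ ^ (-((Module.finrank ℝ E : ℝ) - 1)) ∂ν ∂μ ≤
      ENNReal.ofReal (Module.finrank ℝ E * μ.real (ball 0 1) * (ρ + dist p q + s)) *
        ν univ := by
  set e : ℝ := -((Module.finrank ℝ E : ℝ) - 1)
  rw [lintegral_lintegral_swap (by fun_prop), ← lintegral_const]
  refine lintegral_mono_ae ?_
  filter_upwards [compl_mem_ae_iff.2 hν] with w hw
  rw [compl_compl, mem_ball] at hw
  have hsub : closedBall p ρ ⊆ ball w (ρ + dist p q + s) := fun z hz => by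
    rw [mem_closedBall] at hz
    rw [mem_ball]
    linarith [dist_triangle4 z p q w, dist_comm w q]
  calc ∫⁻ z in closedBall p ρ, ‖z - w‖ₑ ^ e ∂μ
      ≤ ∫⁻ z in ball w (ρ + dist p q + s), ‖z - w‖ₑ ^ e ∂μ := lintegral_mono_set hsub
    _ = _ := lintegral_ball_enorm_sub_rpow_neg_finrank_sub_one μ w
          (by linarith [dist_nonneg (x := p) (y := q), dist_nonneg (x := w) (y := q)])

end HaarIntegrals

theorem enorm_le_ofReal_mul_enorm_rpow_neg {E F : Type*} [NormedAddCommGroup E]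
    [NormedAddCommGroup F] {f : E → F} {c α : ℝ} (hc : 0 < c) (hα : 0 < α)
    (hf : ∀ u ≠ 0, ‖f u‖ ≤ c * ‖u‖ ^ (-α)) (u : E) :
    ‖f u‖ₑ ≤ ENNReal.ofReal c * ‖u‖ₑ ^ (-α) := by
  rcases eq_or_ne u 0 with rfl | hu
  · simp [ENNReal.zero_rpow_of_neg (neg_neg_of_pos hα), ENNReal.mul_top, hc]
  · have hu : 0 < ‖u‖ := norm_pos_iff.2 hu
    rw [← ofReal_norm, ← ofReal_norm, ENNReal.ofReal_rpow_of_pos hu,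
      ← ENNReal.ofReal_mul hc.le]
    exact ENNReal.ofReal_le_ofReal (hf u (norm_pos_iff.1 hu))

theorem enorm_integral_mul_rescale_le {E : Type*} [NormedAddCommGroup E] [NormedSpace ℝ E]
    [MeasurableSpace E] [OpensMeasurableSpace E] (μ : Measure E) {F φ : E → ℝ} {c M r : ℝ}
    (hc : 0 ≤ c) (hr : 0 < r) (hM : ∀ z, ‖φ z‖ ≤ M) (hφ : tsupport φ ⊆ closedBall 0 1) (p : E) :
    ‖∫ z, F z * (c * φ (r⁻¹ • (p - z))) ∂μ‖ₑ ≤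
      ENNReal.ofReal (c * M) * ∫⁻ z in closedBall p r, ‖F z‖ₑ ∂μ := by
  have hpointwise : ∀ z, ‖F z * (c * φ (r⁻¹ • (p - z)))‖ₑ ≤
      (closedBall p r).indicator (fun z => ENNReal.ofReal (c * M) * ‖F z‖ₑ) z := by
    intro z
    by_cases hz : z ∈ closedBall p r
    · rw [indicator_of_mem hz, enorm_mul, mul_comm, ← ofReal_norm (c * _), norm_mul,
        Real.norm_of_nonneg hc]
      gcongr
      exact hM _
    · have hout : r⁻¹ • (p - z) ∉ tsupport φ := fun h => hz <| by
        have h := hφ h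
        rw [mem_closedBall_zero_iff, norm_smul, Real.norm_of_nonneg (inv_nonneg.2 hr.le),
          inv_mul_le_iff₀ hr, mul_one, ← dist_eq_norm] at h
        exact mem_closedBall.2 (dist_comm z p ▸ h)
      simp [image_eq_zero_of_notMem_tsupport hout, hz]
  calc ‖∫ z, F z * (c * φ (r⁻¹ • (p - z))) ∂μ‖ₑ
      ≤ ∫⁻ z, ‖F z * (c * φ (r⁻¹ • (p - z)))‖ₑ ∂μ := enorm_integral_le_lintegral_enorm _
    _ ≤ ∫⁻ z, (closedBall p r).indicator (fun z => ENNReal.ofReal (c * M) * ‖F z‖ₑ) z ∂μ :=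
        lintegral_mono hpointwise
    _ = _ := by
        rw [lintegral_indicator measurableSet_closedBall,
          lintegral_const_mul' _ _ ENNReal.ofReal_ne_top]

theorem measure_univ_le_maxFn_mul {N : ℕ} {μ : Measure (EuclideanSpace ℝ (Fin N))}
    {x : EuclideanSpace ℝ (Fin N)} {ρ : ℝ} (hρ : 0 < ρ) (hμ : μ (ball x ρ)ᶜ = 0) :
    μ univ ≤ maxFn μ x * volume (ball x ρ) := by
  have hball : μ univ = μ (ball x ρ) := by
    rw [← union_compl_self (ball x ρ)]
    exact le_antisymm ((measure_union_le _ _).trans (by rw [hμ, add_zero]))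
      (measure_mono subset_union_left)
  rw [hball, ← ENNReal.div_mul_cancel (b := μ (ball x ρ)) (measure_ball_pos volume x hρ).ne'
    measure_ball_lt_top.ne]
  gcongr
  exact le_iSup₂ (f := fun s (_ : 0 < s) => μ (ball x s) / volume (ball x s)) ρ hρ

theorem enorm_mollified_potential_le {N : ℕ} (hN : 2 ≤ N)
    {K φ : EuclideanSpace ℝ (Fin N) → ℝ} {c M : ℝ} (hc : 0 < c)
    (hK : ∀ u ≠ 0, ‖K u‖ ≤ c * ‖u‖ ^ (-((N : ℝ) - 1)))
    (hM : ∀ z, ‖φ z‖ ≤ M) (hφ : tsupport φ ⊆ closedBall 0 1)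
    (μ : Measure (EuclideanSpace ℝ (Fin N))) [SFinite μ] {r : ℝ} (hr : 0 < r)
    {x p : EuclideanSpace ℝ (Fin N)} (hp : dist p x ≤ r) (hμ : μ (ball x (2 * r))ᶜ = 0) :
    ‖∫ z, (∫ w, K (z - w) ∂μ) * ((r ^ N)⁻¹ * φ (r⁻¹ • (p - z)))‖ₑ ≤
      ENNReal.ofReal
          (2 ^ (N + 2) * N * c * M * volume.real (ball (0 : EuclideanSpace ℝ (Fin N)) 1) ^ 2 * r) *
        maxFn μ x := by
  have : Nontrivial (EuclideanSpace ℝ (Fin N)) :=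
    Module.nontrivial_of_finrank_pos (R := ℝ) (by rw [finrank_euclideanSpace_fin]; omega)
  set v := volume.real (ball (0 : EuclideanSpace ℝ (Fin N)) 1)
  have hM0 : 0 ≤ M := (norm_nonneg _).trans (hM 0)
  have hKe : ∀ u, ‖K u‖ₑ ≤ ENNReal.ofReal c * ‖u‖ₑ ^ (-((N : ℝ) - 1)) :=
    enorm_le_ofReal_mul_enorm_rpow_neg hc
      (by linarith [show (2 : ℝ) ≤ N by exact_mod_cast hN]) hK
  have hpot : ∫⁻ z in closedBall p r, ‖∫ w, K (z - w) ∂μ‖ₑ ≤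
      ENNReal.ofReal c * ∫⁻ z in closedBall p r, ∫⁻ w, ‖z - w‖ₑ ^ (-((N : ℝ) - 1)) ∂μ := by
    rw [← lintegral_const_mul' _ _ ENNReal.ofReal_ne_top]
    refine lintegral_mono fun z => (enorm_integral_le_lintegral_enorm _).trans ?_
    rw [← lintegral_const_mul' _ _ ENNReal.ofReal_ne_top]
    exact lintegral_mono fun w => hKe _
  have hsing := lintegral_closedBall_lintegral_enorm_sub_rpow_le volume μ (p := p) hr.le hμ
  rw [finrank_euclideanSpace_fin] at hsing
  have hmax := measure_univ_le_maxFn_mul (by positivity : 0 < 2 * r) hμ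
  rw [Measure.addHaar_ball volume x (by positivity : 0 ≤ 2 * r), finrank_euclideanSpace_fin,
    ← ofReal_measureReal measure_ball_lt_top.ne] at hmax
  calc _ ≤ ENNReal.ofReal ((r ^ N)⁻¹ * M) * ∫⁻ z in closedBall p r, ‖∫ w, K (z - w) ∂μ‖ₑ :=
        enorm_integral_mul_rescale_le volume (by positivity) hr hM hφ p
    _ ≤ ENNReal.ofReal ((r ^ N)⁻¹ * M) *
        (ENNReal.ofReal c * (ENNReal.ofReal (N * v * (r + dist p x + 2 * r)) * μ univ)) := by
        gcongr
        exact hpot.trans (by gcongr)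
    _ ≤ ENNReal.ofReal ((r ^ N)⁻¹ * M) * (ENNReal.ofReal c *
        (ENNReal.ofReal (N * v * (4 * r)) *
          (maxFn μ x * (ENNReal.ofReal ((2 * r) ^ N) * ENNReal.ofReal v)))) := by
        gcongr
        linarith
    _ = ENNReal.ofReal ((r ^ N)⁻¹ * M * c * (N * v * (4 * r)) * ((2 * r) ^ N * v)) *
          maxFn μ x := by
        rw [ENNReal.ofReal_mul (p := (r ^ N)⁻¹ * M * c * (N * v * (4 * r))) (by positivity),
          ENNReal.ofReal_mul (p := (r ^ N)⁻¹ * M * c) (by positivity),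
          ENNReal.ofReal_mul (p := (r ^ N)⁻¹ * M) (by positivity),
          ENNReal.ofReal_mul (p := (2 * r) ^ N) (by positivity)]
        ring
    _ = _ := by
        congr 2
        rw [mul_pow, pow_add]
        field_simp
        ring

theorem mollified_potential_increment_estimate_general
    (N : ℕ) (hN : 2 ≤ N) (C₀ : ℝ)
    (K : EuclideanSpace ℝ (Fin N) → ℝ) (hK : KernelCond N C₀ K)
    (φ : EuclideanSpace ℝ (Fin N) → ℝ)
    (hφC1 : ContDiff ℝ 1 φ)
    (hφsupp : tsupport φ ⊆ closedBall 0 1) :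
    ∃ C : ℝ, 0 < C ∧ ∀ μ : Measure (EuclideanSpace ℝ (Fin N)), IsFiniteMeasure μ →
      ∀ r : ℝ, 0 < r → ∀ x y : EuclideanSpace ℝ (Fin N), ‖x - y‖ = r →
        μ (ball x (2 * r))ᶜ = 0 →
          ENNReal.ofReal
              |(∫ z, (∫ w, K (z - w) ∂μ) * ((r ^ N)⁻¹ * φ (r⁻¹ • (x - z)))) -
                ∫ z, (∫ w, K (z - w) ∂μ) * ((r ^ N)⁻¹ * φ (r⁻¹ • (y - z)))| ≤
            ENNReal.ofReal (C * ‖x - y‖) * maxFn μ x := by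
  obtain ⟨M, hM⟩ := hφC1.continuous.bounded_above_of_compact_support
    (isCompact_closedBall 0 1 |>.of_isClosed_subset (isClosed_tsupport φ) hφsupp)
  have hM0 : 0 ≤ M := (norm_nonneg _).trans (hM 0)
  -- `c > 0` makes the bound `ofReal c * ‖0‖ₑ ^ (1 - N) = ∞` hold at `u = 0` too.
  set c := max C₀ 1
  have hKc : ∀ u ≠ 0, ‖K u‖ ≤ c * ‖u‖ ^ (-((N : ℝ) - 1)) := fun u hu => by
    have h := hK.2 0 (by norm_num) u hu
    rw [norm_iteratedFDeriv_zero, Nat.cast_zero, add_zero] at h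
    exact h.trans (by gcongr; exact le_max_left _ _)
  set B := 2 ^ (N + 2) * N * c * M * volume.real (ball (0 : EuclideanSpace ℝ (Fin N)) 1) ^ 2
  refine ⟨2 * B + 1, by positivity, fun μ _ r hr x y hxy hμ => ?_⟩
  have hbound := fun p (hp : dist p x ≤ r) =>
    enorm_mollified_potential_le hN (by positivity) hKc hM hφsupp μ hr hp hμ
  rw [← Real.enorm_eq_ofReal_abs, hxy]
  calc _ ≤ _ := enorm_sub_le
    _ ≤ ENNReal.ofReal (B * r) * maxFn μ x + ENNReal.ofReal (B * r) * maxFn μ x :=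
        add_le_add (hbound x (by simp [hr.le]))
          (hbound y (by rw [dist_eq_norm, ← hxy, norm_sub_rev]))
    _ ≤ ENNReal.ofReal ((2 * B + 1) * r) * maxFn μ x := by
        rw [← add_mul, ← ENNReal.ofReal_add (by positivity) (by positivity)]
        gcongr
        linarith

/-- Estimate (2.2) of the paper: for a kernel `K` satisfying the kernel condition and a
mollifier `φ` (even, `C¹`, supported in the closed unit ball, of integral `1`,
`φ_r(z) = r^{-N} φ(z/r)`) there is `C = C(N, C₀, φ)` such that for every finite positive
Radon measure `μ` supported in `B(x, 2r)` and every `y` with `|x−y| = r`,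
`|(K⋆μ⋆φ_r)(x) − (K⋆μ⋆φ_r)(y)| ≤ C |x−y| M(μ)(x)`. -/
theorem mollified_potential_increment_estimate
    (N : ℕ) (hN : 2 ≤ N) (C₀ : ℝ)
    (K : EuclideanSpace ℝ (Fin N) → ℝ) (hK : KernelCond N C₀ K)
    (φ : EuclideanSpace ℝ (Fin N) → ℝ)
    (hφeven : ∀ z, φ (-z) = φ z) (hφC1 : ContDiff ℝ 1 φ)
    (hφsupp : tsupport φ ⊆ closedBall 0 1) (hφint : (∫ z, φ z) = 1) :
    ∃ C : ℝ, 0 < C ∧ ∀ μ : Measure (EuclideanSpace ℝ (Fin N)), IsFiniteMeasure μ →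
      ∀ r : ℝ, 0 < r → ∀ x y : EuclideanSpace ℝ (Fin N), ‖x - y‖ = r →
        μ (ball x (2 * r))ᶜ = 0 →
          ENNReal.ofReal
              |(∫ z, (∫ w, K (z - w) ∂μ) * ((r ^ N)⁻¹ * φ (r⁻¹ • (x - z)))) -
                ∫ z, (∫ w, K (z - w) ∂μ) * ((r ^ N)⁻¹ * φ (r⁻¹ • (y - z)))| ≤
            ENNReal.ofReal (C * ‖x - y‖) * maxFn μ x :=
  mollified_potential_increment_estimate_general N hN C₀ K hK φ hφC1 hφsupp
end

section
/- Let N ≥ 2, let K satisfy the kernel condition, and let ψ : ℝ^N → ℝ^N be a continuously differentiable vector field with compact support in the closed unit ball and ∫ ψ = 0; for R > 0 set ψ_R(z) = R^{-N} ψ(z/R). There exists a constant C, depending only on N, C₀ and ψ, such that for every R > 0 and every w ∈ ℝ^N with |w| > 2R one has |∫_{ℝ^N} ∇K(ξ − w)·ψ_R(ξ) dξ| ≤ C · R · |w|^{-(N+1)}. -/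
open MeasureTheory Metric Filter
open scoped ENNReal Topology NNReal

/-!
Because `∫ ψ_R = 0`, the constant `∇K(-w)` may be subtracted from `∇K(ξ - w)` under the
integral. On the support `|ξ| ≤ R` of `ψ_R`, the segment from `-w` to `ξ - w` lies in the ball
`B(-w, |w|/2)`, where `|∇²K| ≤ C₀ 2^{N+1} |w|^{-(N+1)}`; the mean value theorem then bounds the
difference of gradients by `C₀ 2^{N+1} |w|^{-(N+1)} R`, and `∫ |ψ_R| = ∫ |ψ|`.
-/

open scoped RealInnerProductSpace
open Module

lemma norm_gradient_sub_le_of_norm_iteratedFDeriv_two_le {E : Type*} [NormedAddCommGroup E]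
    [InnerProductSpace ℝ E] [CompleteSpace E] {f : E → ℝ} {s : Set E}
    (hs : Convex ℝ s) (hso : IsOpen s) (hf : ContDiffOn ℝ 2 f s) {M : ℝ}
    (hM : ∀ y ∈ s, ‖iteratedFDeriv ℝ 2 f y‖ ≤ M) {x y : E} (hx : x ∈ s) (hy : y ∈ s) :
    ‖gradient f y - gradient f x‖ ≤ M * ‖y - x‖ := by
  have hdiff : DifferentiableOn ℝ (fderiv ℝ f) s :=
    (hf.fderiv_of_isOpen hso (by norm_num)).differentiableOn one_ne_zero
  have hbound : ∀ z ∈ s, ‖fderiv ℝ (fderiv ℝ f) z‖ ≤ M := fun z hz => by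
    rw [← norm_iteratedFDeriv_zero (𝕜 := ℝ) (f := fderiv ℝ (fderiv ℝ f)) (x := z),
      norm_iteratedFDeriv_fderiv, norm_iteratedFDeriv_fderiv]
    exact hM z hz
  rw [gradient, gradient, ← map_sub, LinearIsometryEquiv.norm_map]
  exact hs.norm_image_sub_le_of_norm_fderiv_le
    (fun z hz => hdiff.differentiableAt (hso.mem_nhds hz)) hbound hx hy

lemma rpow_neg_le_two_rpow_mul_rpow_neg {a b p : ℝ} (ha : 0 < a) (hab : a / 2 ≤ b) (hp : 0 ≤ p) :
    b ^ (-p) ≤ 2 ^ p * a ^ (-p) :=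
  calc b ^ (-p) ≤ (a / 2) ^ (-p) :=
        Real.rpow_le_rpow_of_nonpos (by positivity) hab (neg_nonpos.2 hp)
    _ = 2 ^ p * a ^ (-p) := by
        rw [Real.div_rpow ha.le zero_le_two, Real.rpow_neg zero_le_two, div_inv_eq_mul, mul_comm]

lemma norm_gradient_sub_gradient_neg_le {N : ℕ} {C₀ : ℝ} {K : EuclideanSpace ℝ (Fin N) → ℝ}
    (hK : KernelCond N C₀ K) {w ξ : EuclideanSpace ℝ (Fin N)} (hξ : 2 * ‖ξ‖ < ‖w‖) :
    ‖gradient K (ξ - w) - gradient K (-w)‖ ≤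
      |C₀| * 2 ^ (N + 1 : ℝ) * ‖w‖ ^ (-(N + 1 : ℝ)) * ‖ξ‖ := by
  have hw : 0 < ‖w‖ := by linarith [norm_nonneg ξ]
  have hfar : ∀ y ∈ ball (-w) (‖w‖ / 2), ‖w‖ / 2 ≤ ‖y‖ := fun y hy => by
    have := norm_le_norm_add_norm_sub' (-w) y
    rw [norm_neg, ← dist_eq_norm, dist_comm] at this
    linarith [mem_ball.1 hy]
  have hne : ∀ y ∈ ball (-w) (‖w‖ / 2), y ≠ 0 := fun y hy h0 => by
    have := hfar y hy
    rw [h0, norm_zero] at this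
    linarith
  have hbound : ∀ y ∈ ball (-w) (‖w‖ / 2),
      ‖iteratedFDeriv ℝ 2 K y‖ ≤ |C₀| * 2 ^ (N + 1 : ℝ) * ‖w‖ ^ (-(N + 1 : ℝ)) := fun y hy =>
    calc ‖iteratedFDeriv ℝ 2 K y‖ ≤ C₀ * ‖y‖ ^ (-(N + 1 : ℝ)) := by
          convert hK.2 2 le_rfl y (hne y hy) using 3; push_cast; ring
      _ ≤ |C₀| * (2 ^ (N + 1 : ℝ) * ‖w‖ ^ (-(N + 1 : ℝ))) := by
          gcongr
          · exact le_abs_self C₀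
          · exact rpow_neg_le_two_rpow_mul_rpow_neg hw (hfar y hy) (by positivity)
      _ = _ := by ring
  have h := norm_gradient_sub_le_of_norm_iteratedFDeriv_two_le (convex_ball _ _) isOpen_ball
    (hK.1.mono fun y hy => hne y hy) hbound (x := -w) (y := ξ - w)
    (mem_ball_self (by positivity))
    (by rw [mem_ball, dist_eq_norm, sub_neg_eq_add, sub_add_cancel]; linarith)
  rwa [sub_neg_eq_add, sub_add_cancel] at h

lemma abs_integral_inner_le_of_integral_eq_zero {α E : Type*} [MeasurableSpace α] {μ : Measure α}
    [NormedAddCommGroup E] [InnerProductSpace ℝ E] [CompleteSpace E] {G φ : α → E}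
    (hG : AEStronglyMeasurable G μ) (hφ : Integrable φ μ) (hφ₀ : ∫ x, φ x ∂μ = 0) (g₀ : E)
    {L : ℝ} (hL : ∀ x, φ x ≠ 0 → ‖G x - g₀‖ ≤ L) :
    |∫ x, ⟪G x, φ x⟫ ∂μ| ≤ L * ∫ x, ‖φ x‖ ∂μ := by
  have hpt : ∀ x, ‖⟪G x - g₀, φ x⟫‖ ≤ L * ‖φ x‖ := fun x => by
    by_cases h : φ x = 0
    · simp [h]
    · exact (norm_inner_le_norm _ _).trans (mul_le_mul_of_nonneg_right (hL x h) (norm_nonneg _))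
  have hint : Integrable (fun x => ⟪G x - g₀, φ x⟫) μ :=
    (hφ.norm.const_mul L).mono' ((hG.sub aestronglyMeasurable_const).inner hφ.1) (ae_of_all _ hpt)
  have hsplit : ∫ x, ⟪G x, φ x⟫ ∂μ = ∫ x, ⟪G x - g₀, φ x⟫ ∂μ := by
    have : ∀ x, ⟪G x, φ x⟫ = ⟪G x - g₀, φ x⟫ + ⟪g₀, φ x⟫ := fun x => by
      rw [inner_sub_left]; ring
    simp_rw [this]
    rw [integral_add hint (hφ.const_inner g₀), integral_inner hφ, hφ₀, inner_zero_right, add_zero]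
  rw [hsplit, ← Real.norm_eq_abs, ← integral_const_mul]
  exact norm_integral_le_of_norm_le (hφ.norm.const_mul L) (ae_of_all _ hpt)

section Rescale

variable {E F : Type*} [NormedAddCommGroup E] [NormedSpace ℝ E] [NormedAddCommGroup F]
  [NormedSpace ℝ F]

noncomputable def rescale (R : ℝ) (f : E → F) (x : E) : F :=
  (R ^ finrank ℝ E)⁻¹ • f (R⁻¹ • x)

lemma norm_le_of_rescale_ne_zero {f : E → F} (hf : tsupport f ⊆ closedBall 0 1) {R : ℝ}
    (hR : 0 < R) {x : E} (hx : rescale R f x ≠ 0) : ‖x‖ ≤ R := by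
  have hmem : R⁻¹ • x ∈ closedBall (0 : E) 1 :=
    hf (subset_tsupport f (right_ne_zero_of_smul hx))
  rw [mem_closedBall_zero_iff, norm_smul, Real.norm_of_nonneg (inv_nonneg.2 hR.le),
    inv_mul_le_iff₀ hR, mul_one] at hmem
  exact hmem

variable [MeasurableSpace E] [BorelSpace E] [FiniteDimensional ℝ E] (μ : Measure E)
  [μ.IsAddHaarMeasure]

lemma MeasureTheory.Integrable.rescale {f : E → F} (hf : Integrable f μ) {R : ℝ} (hR : R ≠ 0) :
    Integrable (rescale R f) μ :=
  (hf.comp_smul (inv_ne_zero hR)).smul _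

lemma integral_rescale (f : E → F) {R : ℝ} (hR : 0 < R) :
    ∫ x, rescale R f x ∂μ = ∫ x, f x ∂μ := by
  simp only [rescale]
  rw [integral_smul, Measure.integral_comp_inv_smul_of_nonneg μ f hR.le,
    inv_smul_smul₀ (pow_ne_zero _ hR.ne')]

lemma integral_norm_rescale (f : E → F) {R : ℝ} (hR : 0 < R) :
    ∫ x, ‖rescale R f x‖ ∂μ = ∫ x, ‖f x‖ ∂μ := by
  simp_rw [rescale, norm_smul, Real.norm_of_nonneg (inv_nonneg.2 (pow_nonneg hR.le _))]
  exact integral_rescale μ (fun x => ‖f x‖) hR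

end Rescale

theorem adjoint_action_far_field_estimate_general
    (N : ℕ) (C₀ : ℝ)
    (K : EuclideanSpace ℝ (Fin N) → ℝ) (hK : KernelCond N C₀ K)
    (ψ : EuclideanSpace ℝ (Fin N) → EuclideanSpace ℝ (Fin N))
    (hψC1 : ContDiff ℝ 1 ψ) (hψsupp : tsupport ψ ⊆ closedBall 0 1)
    (hψint : (∫ z, ψ z) = 0) :
    ∃ C : ℝ, 0 < C ∧ ∀ R : ℝ, 0 < R → ∀ w : EuclideanSpace ℝ (Fin N), 2 * R < ‖w‖ →
      |∫ ξ, ∑ i, gradient K (ξ - w) i * ((R ^ N)⁻¹ • ψ (R⁻¹ • ξ)) i| ≤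
        C * R * ‖w‖ ^ (-(N + 1 : ℝ)) := by
  refine ⟨|C₀| * 2 ^ (N + 1 : ℝ) * (∫ z, ‖ψ z‖) + 1, by positivity, fun R hR w hw => ?_⟩
  have hψ : Integrable ψ := hψC1.continuous.integrable_of_hasCompactSupport
    ((isCompact_closedBall 0 1).of_isClosed_subset (isClosed_tsupport ψ) hψsupp)
  have hinner : ∀ ξ, ∑ i, gradient K (ξ - w) i * ((R ^ N)⁻¹ • ψ (R⁻¹ • ξ)) i =
      ⟪gradient K (ξ - w), rescale R ψ ξ⟫ := fun ξ => by
    rw [rescale, finrank_euclideanSpace_fin, PiLp.inner_apply]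
    simp only [RCLike.inner_apply, conj_trivial]
    exact Finset.sum_congr rfl fun i _ => mul_comm _ _
  have hG : Measurable fun ξ => gradient K (ξ - w) :=
    ((InnerProductSpace.toDual ℝ _).symm.continuous.measurable.comp
      (measurable_fderiv ℝ K)).comp (measurable_sub_const w)
  have key := abs_integral_inner_le_of_integral_eq_zero hG.aestronglyMeasurable
    (hψ.rescale volume hR.ne') (by rw [integral_rescale volume ψ hR, hψint]) (gradient K (-w))
    (L := |C₀| * 2 ^ (N + 1 : ℝ) * ‖w‖ ^ (-(N + 1 : ℝ)) * R) fun ξ hξ => by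
      have hξR := norm_le_of_rescale_ne_zero hψsupp hR hξ
      refine (norm_gradient_sub_gradient_neg_le hK (by linarith)).trans ?_
      gcongr
  simp_rw [hinner]
  rw [integral_norm_rescale volume ψ hR] at key
  calc _ ≤ _ := key
    _ = |C₀| * 2 ^ (N + 1 : ℝ) * (∫ z, ‖ψ z‖) * R * ‖w‖ ^ (-(N + 1 : ℝ)) := by ring
    _ ≤ _ := by gcongr; linarith

/-- Case 1 of the claim in the proof of Theorem B: for a kernel `K` satisfying the kernel
condition and a `C¹` vector field `ψ` supported in the closed unit ball with zero
integral (`ψ_R(z) = R^{-N} ψ(z/R)`), there is `C = C(N, C₀, ψ)` such that for all `R > 0`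
and all `w` with `|w| > 2R`, `|∫ ∇K(ξ−w)·ψ_R(ξ) dξ| ≤ C · R · |w|^{-(N+1)}`. -/
theorem adjoint_action_far_field_estimate
    (N : ℕ) (hN : 2 ≤ N) (C₀ : ℝ)
    (K : EuclideanSpace ℝ (Fin N) → ℝ) (hK : KernelCond N C₀ K)
    (ψ : EuclideanSpace ℝ (Fin N) → EuclideanSpace ℝ (Fin N))
    (hψC1 : ContDiff ℝ 1 ψ) (hψsupp : tsupport ψ ⊆ closedBall 0 1)
    (hψint : (∫ z, ψ z) = 0) :
    ∃ C : ℝ, 0 < C ∧ ∀ R : ℝ, 0 < R → ∀ w : EuclideanSpace ℝ (Fin N), 2 * R < ‖w‖ →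
      |∫ ξ, ∑ i, gradient K (ξ - w) i * ((R ^ N)⁻¹ • ψ (R⁻¹ • ξ)) i| ≤
        C * R * ‖w‖ ^ (-(N + 1 : ℝ)) :=
  adjoint_action_far_field_estimate_general N C₀ K hK ψ hψC1 hψsupp hψint
end
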